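/- arXiv:2510.00221 — 10 statements merged into one kernel-verified Lean document; each statement's English description precedes it below -/
import Mathlib

section
/- Maximum principle for the Godunov-type scheme: assume the CFL condition λ(M + L) ≤ 1. Set ρ_min = inf_{j∈ℤ} ρ⁰_j and ρ_max = sup_{j∈ℤ} ρ⁰_j. Then for every n ∈ ℕ and every j ∈ ℤ one has ρ_min ≤ ρⁿ_j ≤ ρ_max (in particular 0 ≤ ρⁿ_j ≤ 1). -/
set_option maxHeartbeats 2000000 in
/-- Maximum principle for the Godunov-type scheme: under the CFL condition
`λ (M + L) ≤ 1`, the numerical solution stays between the infimum and the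
supremum of the initial datum. -/
theorem godunov_maximum_principle
    (lam M L : ℝ) (hlam : 0 < lam) (hM : 0 ≤ M) (hL : 0 ≤ L)
    (V : ℝ → ℝ)
    (hVlip : ∀ x y : ℝ, |V x - V y| ≤ L * |x - y|)
    (hVmono : ∀ x ∈ Set.Icc (0:ℝ) 1, ∀ y ∈ Set.Icc (0:ℝ) 1, x ≤ y → V y ≤ V x)
    (hVbd : ∀ ξ ∈ Set.Icc (0:ℝ) 1, V ξ ∈ Set.Icc (0:ℝ) M)
    (γ : ℕ → ℝ)
    (hγnn : ∀ k, 0 ≤ γ k) (hγmono : ∀ k, γ (k+1) ≤ γ k)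
    (hγsum : HasSum γ 1)
    (ρ0 : ℤ → ℝ) (hρ0 : ∀ j, ρ0 j ∈ Set.Icc (0:ℝ) 1)
    (ρ W : ℕ → ℤ → ℝ)
    (hinit : ∀ j : ℤ, ρ 0 j = ρ0 j)
    (hW : ∀ (n : ℕ) (j : ℤ), W n j = ∑' k : ℕ, γ k * ρ n (j + (k:ℤ)))
    (hupd : ∀ (n : ℕ) (j : ℤ),
      ρ (n+1) j = ρ n j + lam * (ρ n (j-1) * V (W n j) - ρ n j * V (W n (j+1))))
    (hCFL : lam * (M + L) ≤ 1) :
    ∀ (n : ℕ) (j : ℤ), (⨅ i : ℤ, ρ0 i) ≤ ρ n j ∧ ρ n j ≤ ⨆ i : ℤ, ρ0 i := by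
  set c := ⨅ i : ℤ, ρ0 i with hcdef
  set m := ⨆ i : ℤ, ρ0 i with hmdef
  have hbb : BddBelow (Set.range ρ0) := ⟨0, by rintro x ⟨i, rfl⟩; exact (hρ0 i).1⟩
  have hba : BddAbove (Set.range ρ0) := ⟨1, by rintro x ⟨i, rfl⟩; exact (hρ0 i).2⟩
  have hc0 : 0 ≤ c := le_ciInf fun i => (hρ0 i).1
  have hm1 : m ≤ 1 := ciSup_le fun i => (hρ0 i).2
  clear_value c m
  have sγ : Summable γ := hγsum.summable
  have hγtot : ∑' k, γ k = 1 := hγsum.tsum_eq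
  have hγ01 : γ 0 ≤ 1 := by
    have := Summable.le_tsum sγ 0 (fun k _ => hγnn k)
    rw [hγtot] at this; exact this
  have sγ' : Summable (fun k => γ (k+1)) := (summable_nat_add_iff 1).mpr sγ
  have hγtail : ∑' k, γ (k+1) = 1 - γ 0 := by
    have := Summable.tsum_eq_zero_add sγ
    rw [hγtot] at this; linarith
  intro n
  induction n with
  | zero =>
    intro j
    rw [hinit]
    rw [hcdef, hmdef]
    exact ⟨ciInf_le hbb j, le_ciSup hba j⟩
  | succ n ih =>
    have h01 : ∀ i, 0 ≤ ρ n i ∧ ρ n i ≤ 1 :=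
      fun i => ⟨hc0.trans (ih i).1, (ih i).2.trans hm1⟩
    have sρ : ∀ i : ℤ, Summable (fun k : ℕ => γ k * ρ n (i + (k:ℤ))) := by
      intro i
      apply Summable.of_nonneg_of_le
        (fun k => mul_nonneg (hγnn k) (h01 _).1)
        (fun k => ?_) sγ
      nlinarith [(h01 (i + (k:ℤ))).2, hγnn k]
    have sρ' : ∀ i : ℤ, Summable (fun k : ℕ => γ (k+1) * ρ n (i + (k:ℤ))) := by
      intro i
      refine Summable.of_nonneg_of_le
        (fun k => mul_nonneg (hγnn (k+1)) (h01 _).1)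
        (fun k => ?_) sγ'
      nlinarith [(h01 (i + (k:ℤ))).2, hγnn (k+1)]
    have sdiff : ∀ i : ℤ, Summable (fun k : ℕ => (γ k - γ (k+1)) * ρ n (i + (k:ℤ))) :=
      fun i => ((sρ i).sub (sρ' i)).congr (fun k => by ring)
    have hWIcc : ∀ i, W n i ∈ Set.Icc (0:ℝ) 1 := by
      intro i
      rw [hW]
      constructor
      · exact tsum_nonneg fun k => mul_nonneg (hγnn k) (h01 _).1
      · calc ∑' k : ℕ, γ k * ρ n (i + (k:ℤ)) ≤ ∑' k, γ k := by
              apply Summable.tsum_le_tsum _ (sρ i) sγ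
              intro k; nlinarith [(h01 (i + (k:ℤ))).2, hγnn k]
          _ = 1 := hγtot
    have hWsplit : ∀ i, W n i = γ 0 * ρ n i + ∑' k : ℕ, γ (k+1) * ρ n ((i+1) + (k:ℤ)) := by
      intro i
      rw [hW, Summable.tsum_eq_zero_add (sρ i)]
      congr 1
      · norm_num
      · apply tsum_congr; intro k
        congr 2
        push_cast; ring
    have hγdiffsum : ∑' k : ℕ, (γ k - γ (k+1)) = γ 0 := by
      rw [Summable.tsum_sub sγ sγ', hγtot, hγtail]; ring
    have hΔ : ∀ i, γ 0 * (c - ρ n i) ≤ W n (i+1) - W n i ∧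
        W n (i+1) - W n i ≤ γ 0 * (m - ρ n i) := by
      intro i
      have hid : W n (i+1) - W n i
          = (∑' k : ℕ, (γ k - γ (k+1)) * ρ n ((i+1) + (k:ℤ))) - γ 0 * ρ n i := by
        rw [hWsplit i, hW n (i+1)]
        have key : ∑' k : ℕ, (γ k - γ (k+1)) * ρ n ((i+1) + (k:ℤ))
            = (∑' k : ℕ, γ k * ρ n ((i+1) + (k:ℤ)))
              - ∑' k : ℕ, γ (k+1) * ρ n ((i+1) + (k:ℤ)) := by
          rw [← Summable.tsum_sub (sρ (i+1)) (sρ' (i+1))]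
          exact tsum_congr fun k => by ring
        rw [key]; ring
      have hub : ∑' k : ℕ, (γ k - γ (k+1)) * ρ n ((i+1) + (k:ℤ)) ≤ γ 0 * m := by
        calc ∑' k : ℕ, (γ k - γ (k+1)) * ρ n ((i+1) + (k:ℤ))
            ≤ ∑' k : ℕ, (γ k - γ (k+1)) * m := by
              apply Summable.tsum_le_tsum _ (sdiff (i+1)) ((sγ.sub sγ').mul_right m)
              intro k
              exact mul_le_mul_of_nonneg_left (ih _).2 (sub_nonneg.2 (hγmono k))
          _ = (∑' k : ℕ, (γ k - γ (k+1))) * m := tsum_mul_right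
          _ = γ 0 * m := by rw [hγdiffsum]
      have hlb : γ 0 * c ≤ ∑' k : ℕ, (γ k - γ (k+1)) * ρ n ((i+1) + (k:ℤ)) := by
        calc γ 0 * c = (∑' k : ℕ, (γ k - γ (k+1))) * c := by rw [hγdiffsum]
          _ = ∑' k : ℕ, (γ k - γ (k+1)) * c := tsum_mul_right.symm
          _ ≤ ∑' k : ℕ, (γ k - γ (k+1)) * ρ n ((i+1) + (k:ℤ)) := by
              apply Summable.tsum_le_tsum _ ((sγ.sub sγ').mul_right c) (sdiff (i+1))
              intro k
              exact mul_le_mul_of_nonneg_left (ih _).1 (sub_nonneg.2 (hγmono k))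
      constructor <;> rw [hid, mul_sub] <;> nlinarith [hub, hlb, mul_le_mul_of_nonneg_left (ih i).1 (hγnn 0), mul_le_mul_of_nonneg_left (ih i).2 (hγnn 0)]
    have hVdiff : ∀ i, V (W n i) - V (W n (i+1)) ≤ L * (m - ρ n i) ∧
        L * (c - ρ n i) ≤ V (W n i) - V (W n (i+1)) := by
      intro i
      have h1 := hWIcc i
      have h2 := hWIcc (i+1)
      have hd := hΔ i
      have hmρ : 0 ≤ m - ρ n i := sub_nonneg.2 (ih i).2
      have hρc : 0 ≤ ρ n i - c := sub_nonneg.2 (ih i).1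
      constructor
      · rcases le_total (W n (i+1)) (W n i) with h | h
        · have hmono := hVmono _ h2 _ h1 h
          nlinarith [mul_nonneg hL hmρ]
        · have hlip := hVlip (W n i) (W n (i+1))
          have h3 : |W n i - W n (i+1)| = W n (i+1) - W n i := by
            rw [abs_sub_comm, abs_of_nonneg (by linarith)]
          have h4 := le_abs_self (V (W n i) - V (W n (i+1)))
          rw [h3] at hlip
          nlinarith [hd.2, mul_le_mul_of_nonneg_left hd.2 hL,
            mul_nonneg (mul_nonneg hL hmρ) (sub_nonneg.2 hγ01)]
      · rcases le_total (W n i) (W n (i+1)) with h | h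
        · have hmono := hVmono _ h1 _ h2 h
          nlinarith [mul_nonneg hL hρc]
        · have hlip := hVlip (W n i) (W n (i+1))
          have h3 : |W n i - W n (i+1)| = W n i - W n (i+1) := by
            rw [abs_of_nonneg (by linarith)]
          have h4 := neg_abs_le (V (W n i) - V (W n (i+1)))
          rw [h3] at hlip
          nlinarith [hd.1, mul_le_mul_of_nonneg_left hd.1 hL,
            mul_nonneg (mul_nonneg hL hρc) (sub_nonneg.2 hγ01)]
    intro j
    rw [hupd]
    have hA := hVbd _ (hWIcc j)
    have hB := hVbd _ (hWIcc (j+1))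
    have hd := hVdiff j
    have hr := ih j
    have hp := ih (j-1)
    obtain ⟨hA0, hAM⟩ := hA
    obtain ⟨hB0, hBM⟩ := hB
    set r := ρ n j
    set p := ρ n (j-1)
    set A := V (W n j)
    set B := V (W n (j+1))
    have hp1 : p ≤ 1 := (h01 _).2
    have hp0 : 0 ≤ p := (h01 _).1
    clear_value r p A B
    have hmr : 0 ≤ m - r := sub_nonneg.2 hr.2
    have hrc : 0 ≤ r - c := sub_nonneg.2 hr.1
    constructor
    · -- lower bound
      have h1 : L * (c - r) ≤ p * (A - B) := by
        rcases le_total A B with h | h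
        · nlinarith [hd.2]
        · nlinarith [hd.2, mul_nonneg hp0 (sub_nonneg.2 h)]
      have h2 : M * (c - r) ≤ B * (p - r) := by
        nlinarith [mul_nonneg hB0 (sub_nonneg.2 hp.1), mul_nonneg (sub_nonneg.2 hBM) hrc]
      have h3 := mul_le_mul_of_nonneg_left (add_le_add h1 h2) hlam.le
      have h4 := mul_le_mul_of_nonneg_right hCFL hrc
      nlinarith [h3, h4]
    · -- upper bound
      have h1 : p * (A - B) ≤ L * (m - r) := by
        rcases le_total A B with h | h
        · nlinarith [mul_nonneg hL hmr, mul_nonneg hp0 (sub_nonneg.2 h)]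
        · nlinarith [hd.1]
      have h2 : B * (p - r) ≤ M * (m - r) := by
        nlinarith [mul_nonneg hB0 (sub_nonneg.2 hp.2), mul_nonneg (sub_nonneg.2 hBM) hmr]
      have h3 := mul_le_mul_of_nonneg_left (add_le_add h1 h2) hlam.le
      have h4 := mul_le_mul_of_nonneg_right hCFL hmr
      nlinarith [h3, h4]
end

section
/- L¹-conservation of the Godunov-type scheme: assume the CFL condition λ(M + L) ≤ 1 and that the nonnegative family (ρ⁰_j)_{j∈ℤ} is summable. Then for every n ∈ ℕ the family (ρⁿ_j)_{j∈ℤ} is summable and ∑_{j∈ℤ} ρⁿ_j = ∑_{j∈ℤ} ρ⁰_j. -/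
private lemma godunov_aux
    (lam M L : ℝ) (hlam : 0 < lam) (hM : 0 ≤ M) (hL : 0 ≤ L)
    (V : ℝ → ℝ)
    (hVlip : ∀ x y : ℝ, |V x - V y| ≤ L * |x - y|)
    (hVmono : ∀ x ∈ Set.Icc (0:ℝ) 1, ∀ y ∈ Set.Icc (0:ℝ) 1, x ≤ y → V y ≤ V x)
    (hVbd : ∀ ξ ∈ Set.Icc (0:ℝ) 1, V ξ ∈ Set.Icc (0:ℝ) M)
    (γ : ℕ → ℝ)
    (hγnn : ∀ k, 0 ≤ γ k) (hγmono : ∀ k, γ (k+1) ≤ γ k)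
    (hγsum : HasSum γ 1)
    (hCFL : lam * (M + L) ≤ 1)
    (r : ℤ → ℝ) (hr : ∀ j, r j ∈ Set.Icc (0:ℝ) 1)
    (w : ℤ → ℝ) (hw : ∀ j, w j = ∑' k : ℕ, γ k * r (j + (k:ℤ))) :
    (∀ j, w j ∈ Set.Icc (0:ℝ) 1) ∧
    (∀ j, r j + lam * (r (j-1) * V (w j) - r j * V (w (j+1))) ∈ Set.Icc (0:ℝ) 1) := by
  have hγS : Summable γ := hγsum.summable
  have hγS1 : Summable (fun k : ℕ => γ (k+1)) := (summable_nat_add_iff 1).2 hγS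
  have hγ0le1 : γ 0 ≤ 1 := by
    have h := Summable.le_tsum hγS 0 (fun k _ => hγnn k)
    rwa [hγsum.tsum_eq] at h
  have hS : ∀ j, Summable (fun k : ℕ => γ k * r (j + (k:ℤ))) := fun j =>
    Summable.of_nonneg_of_le (fun k => mul_nonneg (hγnn k) (hr _).1)
      (fun k => mul_le_of_le_one_right (hγnn k) (hr _).2) hγS
  have hwmem : ∀ j, w j ∈ Set.Icc (0:ℝ) 1 := by
    intro j
    rw [hw j]
    constructor
    · exact tsum_nonneg fun k => mul_nonneg (hγnn k) (hr _).1
    · calc ∑' k : ℕ, γ k * r (j + (k:ℤ)) ≤ ∑' k : ℕ, γ k :=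
            Summable.tsum_le_tsum (fun k => mul_le_of_le_one_right (hγnn k) (hr _).2) (hS j) hγS
        _ = 1 := hγsum.tsum_eq
  refine ⟨hwmem, ?_⟩
  have hdiff : ∀ j, w (j+1) - w j ≤ 1 - r j := by
    intro j
    have hS1 : Summable (fun k : ℕ => γ (k+1) * r (j + 1 + (k:ℤ))) :=
      Summable.of_nonneg_of_le (fun k => mul_nonneg (hγnn _) (hr _).1)
        (fun k => mul_le_of_le_one_right (hγnn _) (hr _).2) hγS1
    have hSj1 : Summable (fun k : ℕ => γ k * r (j + 1 + (k:ℤ))) := by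
      have := hS (j+1)
      simpa [add_assoc] using this
    have hwj : w j = γ 0 * r j + ∑' k : ℕ, γ (k+1) * r (j + 1 + (k:ℤ)) := by
      rw [hw j, Summable.tsum_eq_zero_add (hS j)]
      congr 1
      · norm_num
      · refine tsum_congr fun k => ?_
        have : j + ((k+1 : ℕ) : ℤ) = j + 1 + (k:ℤ) := by push_cast; ring
        rw [this]
    have hwj1 : w (j+1) = ∑' k : ℕ, γ k * r (j + 1 + (k:ℤ)) := by
      rw [hw (j+1)]
    have htelS : Summable (fun k : ℕ => (γ k - γ (k+1)) * r (j + 1 + (k:ℤ))) := by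
      simpa [sub_mul] using hSj1.sub hS1
    have hγsub : Summable (fun k : ℕ => γ k - γ (k+1)) := hγS.sub hγS1
    have htail : ∑' k : ℕ, γ (k+1) = 1 - γ 0 := by
      have h := Summable.tsum_eq_zero_add hγS
      rw [hγsum.tsum_eq] at h
      linarith
    have h1 : ∑' k : ℕ, (γ k - γ (k+1)) * r (j + 1 + (k:ℤ)) ≤ γ 0 := by
      calc ∑' k : ℕ, (γ k - γ (k+1)) * r (j + 1 + (k:ℤ))
          ≤ ∑' k : ℕ, (γ k - γ (k+1)) :=
            Summable.tsum_le_tsum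
              (fun k => mul_le_of_le_one_right (sub_nonneg.2 (hγmono k)) (hr _).2)
              htelS hγsub
        _ = (∑' k : ℕ, γ k) - ∑' k : ℕ, γ (k+1) := Summable.tsum_sub hγS hγS1
        _ = γ 0 := by rw [hγsum.tsum_eq, htail]; ring
    have h2 : w (j+1) - w j
        = (∑' k : ℕ, (γ k - γ (k+1)) * r (j + 1 + (k:ℤ))) - γ 0 * r j := by
      rw [hwj1, hwj]
      have : ∑' k : ℕ, (γ k - γ (k+1)) * r (j + 1 + (k:ℤ))
          = (∑' k : ℕ, γ k * r (j + 1 + (k:ℤ))) - ∑' k : ℕ, γ (k+1) * r (j + 1 + (k:ℤ)) := by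
        rw [← Summable.tsum_sub hSj1 hS1]
        exact tsum_congr fun k => by ring
      rw [this]; ring
    have hrj := hr j
    simp only [Set.mem_Icc] at hrj
    nlinarith [hγnn 0, mul_le_of_le_one_right (hγnn 0) hrj.2]
  intro j
  have hrj := hr j; have hrj1 := hr (j-1)
  simp only [Set.mem_Icc] at hrj hrj1
  have hVa := hVbd _ (hwmem j)
  have hVb := hVbd _ (hwmem (j+1))
  simp only [Set.mem_Icc] at hVa hVb
  have hd : V (w j) - V (w (j+1)) ≤ L * (1 - r j) := by
    rcases le_or_gt (w j) (w (j+1)) with h | h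
    · calc V (w j) - V (w (j+1)) ≤ |V (w j) - V (w (j+1))| := le_abs_self _
        _ ≤ L * |w j - w (j+1)| := hVlip _ _
        _ = L * (w (j+1) - w j) := by rw [abs_sub_comm, abs_of_nonneg (by linarith)]
        _ ≤ L * (1 - r j) := mul_le_mul_of_nonneg_left (hdiff j) hL
    · have := hVmono _ (hwmem (j+1)) _ (hwmem j) h.le
      nlinarith
  constructor
  · nlinarith [mul_nonneg hrj1.1 hVa.1, mul_nonneg hlam.le (mul_nonneg hrj1.1 hVa.1),
      mul_nonneg hlam.le hL, mul_le_mul_of_nonneg_left hVb.2 hrj.1,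
      mul_nonneg hlam.le (mul_nonneg hrj.1 hVb.1)]
  · have key : r (j-1) * V (w j) ≤ V (w j) := mul_le_of_le_one_left hVa.1 hrj1.2
    nlinarith [mul_le_mul_of_nonneg_left
        (show V (w j) - r j * V (w (j+1)) ≤ L * (1 - r j) + (1 - r j) * V (w (j+1)) by nlinarith)
        hlam.le,
      mul_nonneg (mul_nonneg hlam.le (sub_nonneg.2 hrj.2)) (sub_nonneg.2 hVb.2),
      mul_nonneg hlam.le hL]

/-- L¹-conservation of the Godunov-type scheme: if the nonnegative initial
family is summable, every time level is summable with the same sum. -/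
theorem godunov_l1_conservation
    (lam M L : ℝ) (hlam : 0 < lam) (hM : 0 ≤ M) (hL : 0 ≤ L)
    (V : ℝ → ℝ)
    (hVlip : ∀ x y : ℝ, |V x - V y| ≤ L * |x - y|)
    (hVmono : ∀ x ∈ Set.Icc (0:ℝ) 1, ∀ y ∈ Set.Icc (0:ℝ) 1, x ≤ y → V y ≤ V x)
    (hVbd : ∀ ξ ∈ Set.Icc (0:ℝ) 1, V ξ ∈ Set.Icc (0:ℝ) M)
    (γ : ℕ → ℝ)
    (hγnn : ∀ k, 0 ≤ γ k) (hγmono : ∀ k, γ (k+1) ≤ γ k)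
    (hγsum : HasSum γ 1)
    (ρ0 : ℤ → ℝ) (hρ0 : ∀ j, ρ0 j ∈ Set.Icc (0:ℝ) 1)
    (ρ W : ℕ → ℤ → ℝ)
    (hinit : ∀ j : ℤ, ρ 0 j = ρ0 j)
    (hW : ∀ (n : ℕ) (j : ℤ), W n j = ∑' k : ℕ, γ k * ρ n (j + (k:ℤ)))
    (hupd : ∀ (n : ℕ) (j : ℤ),
      ρ (n+1) j = ρ n j + lam * (ρ n (j-1) * V (W n j) - ρ n j * V (W n (j+1))))
    (hCFL : lam * (M + L) ≤ 1)
    (hsum0 : Summable fun j : ℤ => ρ0 j) :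
    ∀ n : ℕ, (Summable fun j : ℤ => ρ n j) ∧ ∑' j : ℤ, ρ n j = ∑' j : ℤ, ρ0 j := by
  suffices key : ∀ n : ℕ, (∀ j, ρ n j ∈ Set.Icc (0:ℝ) 1) ∧
      (Summable fun j : ℤ => ρ n j) ∧ ∑' j : ℤ, ρ n j = ∑' j : ℤ, ρ0 j by
    exact fun n => ⟨(key n).2.1, (key n).2.2⟩
  intro n
  induction n with
  | zero =>
    have h0 : (fun j : ℤ => ρ 0 j) = ρ0 := funext hinit
    exact ⟨fun j => by rw [hinit]; exact hρ0 j, by rw [h0]; exact hsum0, by rw [h0]⟩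
  | succ n ih =>
    obtain ⟨hb, hs, ht⟩ := ih
    obtain ⟨hwmem, hstep⟩ := godunov_aux lam M L hlam hM hL V hVlip hVmono hVbd γ
      hγnn hγmono hγsum hCFL (ρ n) hb (W n) (hW n)
    set g : ℤ → ℝ := fun j => ρ n j * V (W n (j+1)) with hgdef
    have hgnn : ∀ j, 0 ≤ g j := fun j => mul_nonneg (hb j).1 (hVbd _ (hwmem _)).1
    have hgle : ∀ j, g j ≤ M * ρ n j := fun j => by
      have h2 := (hVbd _ (hwmem (j+1))).2
      have := mul_le_mul_of_nonneg_left h2 (hb j).1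
      calc g j = ρ n j * V (W n (j+1)) := rfl
        _ ≤ ρ n j * M := this
        _ = M * ρ n j := by ring
    have hg : Summable g := Summable.of_nonneg_of_le hgnn hgle (hs.mul_left M)
    have hg' : Summable (fun j : ℤ => g (j-1)) :=
      ((Equiv.subRight (1:ℤ)).summable_iff (f := g)).2 hg
    have hform : (fun j : ℤ => ρ (n+1) j) = fun j => ρ n j + lam * (g (j-1) - g j) := by
      funext j
      rw [hupd n j]
      have : g (j-1) = ρ n (j-1) * V (W n j) := by
        simp only [hgdef, sub_add_cancel]
      rw [this]
    have hbnd : ∀ j, ρ (n+1) j ∈ Set.Icc (0:ℝ) 1 := fun j => by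
      rw [hupd n j]; exact hstep j
    have hs' : Summable (fun j : ℤ => ρ (n+1) j) := by
      rw [hform]; exact hs.add ((hg'.sub hg).mul_left lam)
    refine ⟨hbnd, hs', ?_⟩
    have hshift : ∑' j : ℤ, g (j-1) = ∑' j : ℤ, g j :=
      (Equiv.subRight (1:ℤ)).tsum_eq g
    calc ∑' j : ℤ, ρ (n+1) j = ∑' j : ℤ, (ρ n j + lam * (g (j-1) - g j)) := by rw [hform]
      _ = (∑' j : ℤ, ρ n j) + ∑' j : ℤ, lam * (g (j-1) - g j) :=
          Summable.tsum_add hs ((hg'.sub hg).mul_left lam)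
      _ = (∑' j : ℤ, ρ n j) + lam * ((∑' j : ℤ, g (j-1)) - ∑' j : ℤ, g j) := by
          rw [tsum_mul_left, Summable.tsum_sub hg' hg]
      _ = ∑' j : ℤ, ρ0 j := by rw [hshift, sub_self, mul_zero, add_zero, ht]
end

section
/- Bounds and conservation for the discrete nonlocal impact: assume the CFL condition λ(M + L) ≤ 1, and set ρ_min = inf_{j∈ℤ} ρ⁰_j, ρ_max = sup_{j∈ℤ} ρ⁰_j. Then ρ_min ≤ Wⁿ_j ≤ ρ_max for every n ∈ ℕ and j ∈ ℤ. Moreover, if the family (ρ⁰_j)_{j∈ℤ} is summable, then for every n ∈ ℕ the family (Wⁿ_j)_{j∈ℤ} is summable and ∑_{j∈ℤ} Wⁿ_j = ∑_{j∈ℤ} ρ⁰_j. -/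
/-- Bounds and conservation for the discrete nonlocal impact: the quantities
`Wⁿ_j` obey the same maximum principle as the initial datum, and if the
initial family is summable then each family `(Wⁿ_j)_j` is summable with the
same total sum. -/
theorem godunov_W_bounds_and_conservation
    (lam M L : ℝ) (hlam : 0 < lam) (hM : 0 ≤ M) (hL : 0 ≤ L)
    (V : ℝ → ℝ)
    (hVlip : ∀ x y : ℝ, |V x - V y| ≤ L * |x - y|)
    (hVmono : ∀ x ∈ Set.Icc (0:ℝ) 1, ∀ y ∈ Set.Icc (0:ℝ) 1, x ≤ y → V y ≤ V x)
    (hVbd : ∀ ξ ∈ Set.Icc (0:ℝ) 1, V ξ ∈ Set.Icc (0:ℝ) M)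
    (γ : ℕ → ℝ)
    (hγnn : ∀ k, 0 ≤ γ k) (hγmono : ∀ k, γ (k+1) ≤ γ k)
    (hγsum : HasSum γ 1)
    (ρ0 : ℤ → ℝ) (hρ0 : ∀ j, ρ0 j ∈ Set.Icc (0:ℝ) 1)
    (ρ W : ℕ → ℤ → ℝ)
    (hinit : ∀ j : ℤ, ρ 0 j = ρ0 j)
    (hW : ∀ (n : ℕ) (j : ℤ), W n j = ∑' k : ℕ, γ k * ρ n (j + (k:ℤ)))
    (hupd : ∀ (n : ℕ) (j : ℤ),
      ρ (n+1) j = ρ n j + lam * (ρ n (j-1) * V (W n j) - ρ n j * V (W n (j+1))))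
    (hCFL : lam * (M + L) ≤ 1) :
    (∀ (n : ℕ) (j : ℤ), (⨅ i : ℤ, ρ0 i) ≤ W n j ∧ W n j ≤ ⨆ i : ℤ, ρ0 i) ∧
    ((Summable fun j : ℤ => ρ0 j) →
      ∀ n : ℕ, (Summable fun j : ℤ => W n j) ∧ ∑' j : ℤ, W n j = ∑' j : ℤ, ρ0 j) := by
  set m := ⨅ i : ℤ, ρ0 i with hm
  set Mx := ⨆ i : ℤ, ρ0 i with hMxdef
  have hbdB : BddBelow (Set.range ρ0) := ⟨0, by rintro _ ⟨i, rfl⟩; exact (hρ0 i).1⟩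
  have hbdA : BddAbove (Set.range ρ0) := ⟨1, by rintro _ ⟨i, rfl⟩; exact (hρ0 i).2⟩
  have hm0 : 0 ≤ m := le_ciInf fun i => (hρ0 i).1
  have hMx1 : Mx ≤ 1 := ciSup_le fun i => (hρ0 i).2
  have hγ0le1 : γ 0 ≤ 1 := le_hasSum hγsum 0 fun k _ => hγnn k
  have hγtend : Filter.Tendsto γ Filter.atTop (nhds 0) := hγsum.summable.tendsto_atTop_zero
  have htelS : Summable (fun k => γ k - γ (k+1)) := by
    apply summable_of_sum_range_le (c := γ 0) (fun k => sub_nonneg.2 (hγmono k))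
    intro n
    rw [Finset.sum_range_sub' γ n]
    have := hγnn n; linarith
  have htel : HasSum (fun k => γ k - γ (k+1)) (γ 0) := by
    have h1 := htelS.hasSum.tendsto_sum_nat
    have h2 : Filter.Tendsto (fun n => ∑ i ∈ Finset.range n, (γ i - γ (i+1)))
        Filter.atTop (nhds (γ 0)) := by
      simp only [Finset.sum_range_sub' γ]
      simpa using tendsto_const_nhds.sub hγtend
    have he := tendsto_nhds_unique h1 h2
    rw [← he]; exact htelS.hasSum
  -- summability of the W-defining series, given bounds on ρ at level n
  have hS1 : ∀ n, (∀ i, m ≤ ρ n i ∧ ρ n i ≤ Mx) → ∀ j : ℤ,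
      Summable (fun k : ℕ => γ k * ρ n (j + (k:ℤ))) := by
    intro n hn j
    apply Summable.of_nonneg_of_le
      (fun k => mul_nonneg (hγnn k) (hm0.trans (hn _).1))
      (fun k => mul_le_of_le_one_right (hγnn k) ((hn _).2.trans hMx1))
      hγsum.summable
  -- W bounds, given bounds on ρ at level n
  have hWb : ∀ n, (∀ i, m ≤ ρ n i ∧ ρ n i ≤ Mx) → ∀ j : ℤ, m ≤ W n j ∧ W n j ≤ Mx := by
    intro n hn j
    have hs := hS1 n hn j
    have hlo : HasSum (fun k => γ k * m) m := by simpa using hγsum.mul_right m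
    have hhi : HasSum (fun k => γ k * Mx) Mx := by simpa using hγsum.mul_right Mx
    rw [hW n j]
    constructor
    · rw [← hlo.tsum_eq]
      exact Summable.tsum_le_tsum (fun k => mul_le_mul_of_nonneg_left (hn _).1 (hγnn k)) hlo.summable hs
    · rw [← hhi.tsum_eq]
      exact Summable.tsum_le_tsum (fun k => mul_le_mul_of_nonneg_left (hn _).2 (hγnn k)) hs hhi.summable
  -- bounds on W n j - W n (j+1), given bounds on ρ at level n
  have hD : ∀ n, (∀ i, m ≤ ρ n i ∧ ρ n i ≤ Mx) → ∀ j : ℤ,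
      W n j - W n (j+1) ≤ γ 0 * (ρ n j - m) ∧
      W n (j+1) - W n j ≤ γ 0 * (Mx - ρ n j) := by
    intro n hn j
    set T := ∑' k : ℕ, γ (k+1) * ρ n ((j+1) + (k:ℤ)) with hT
    have s1 := hS1 n hn (j+1)
    have s2 : Summable (fun k : ℕ => γ (k+1) * ρ n ((j+1) + (k:ℤ))) := by
      apply Summable.of_nonneg_of_le
        (fun k => mul_nonneg (hγnn _) (hm0.trans (hn _).1))
        (fun k => mul_le_mul_of_nonneg_right (hγmono k) (hm0.trans (hn _).1)) s1
    have e1 : W n j = γ 0 * ρ n j + T := by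
      rw [hW n j, Summable.tsum_eq_zero_add (hS1 n hn j)]
      congr 1
      · norm_num
      · apply tsum_congr; intro k
        congr 2
        push_cast; ring
    have e2 : W n (j+1) - T = ∑' k : ℕ, (γ k - γ (k+1)) * ρ n ((j+1) + (k:ℤ)) := by
      rw [hW n (j+1), hT, ← Summable.tsum_sub s1 s2]
      apply tsum_congr; intro k; ring
    have sdiff : Summable (fun k : ℕ => (γ k - γ (k+1)) * ρ n ((j+1) + (k:ℤ))) := by
      simpa [sub_mul] using s1.sub s2
    have hlo2 : γ 0 * m ≤ W n (j+1) - T := by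
      rw [e2, ← (htel.mul_right m).tsum_eq]
      exact Summable.tsum_le_tsum
        (fun k => mul_le_mul_of_nonneg_left (hn _).1 (sub_nonneg.2 (hγmono k)))
        (htel.mul_right m).summable sdiff
    have hhi2 : W n (j+1) - T ≤ γ 0 * Mx := by
      rw [e2, ← (htel.mul_right Mx).tsum_eq]
      exact Summable.tsum_le_tsum
        (fun k => mul_le_mul_of_nonneg_left (hn _).2 (sub_nonneg.2 (hγmono k)))
        sdiff (htel.mul_right Mx).summable
    constructor
    · rw [mul_sub]; linarith
    · rw [mul_sub]; linarith
  -- the main invariant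
  have key : ∀ n, ∀ i : ℤ, m ≤ ρ n i ∧ ρ n i ≤ Mx := by
    intro n
    induction n with
    | zero => intro i; rw [hinit]; exact ⟨ciInf_le hbdB i, le_ciSup hbdA i⟩
    | succ n ih =>
      intro j
      have hWmem := hWb n ih
      have hW01 : ∀ i, W n i ∈ Set.Icc (0:ℝ) 1 :=
        fun i => ⟨hm0.trans (hWmem i).1, (hWmem i).2.trans hMx1⟩
      obtain ⟨hV0nn, hV0M⟩ := hVbd _ (hW01 j)
      obtain ⟨hV1nn, hV1M⟩ := hVbd _ (hW01 (j+1))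
      obtain ⟨hDlo, hDhi⟩ := hD n ih j
      obtain ⟨hjm, hjM⟩ := ih j
      obtain ⟨hj1m, hj1M⟩ := ih (j-1)
      have hmMx : m ≤ Mx := hjm.trans hjM
      have hVd1 : V (W n j) - V (W n (j+1)) ≤ L * (γ 0 * (Mx - ρ n j)) := by
        rcases le_total (W n (j+1)) (W n j) with h | h
        · have h1 := hVmono _ (hW01 (j+1)) _ (hW01 j) h
          have h2 : 0 ≤ L * (γ 0 * (Mx - ρ n j)) :=
            mul_nonneg hL (mul_nonneg (hγnn 0) (by linarith))
          linarith
        · calc V (W n j) - V (W n (j+1)) ≤ |V (W n j) - V (W n (j+1))| := le_abs_self _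
            _ ≤ L * |W n j - W n (j+1)| := hVlip _ _
            _ = L * (W n (j+1) - W n j) := by
                rw [abs_of_nonpos (by linarith), neg_sub]
            _ ≤ L * (γ 0 * (Mx - ρ n j)) := mul_le_mul_of_nonneg_left hDhi hL
      have hVd2 : -(L * (γ 0 * (ρ n j - m))) ≤ V (W n j) - V (W n (j+1)) := by
        rcases le_total (W n j) (W n (j+1)) with h | h
        · have h1 := hVmono _ (hW01 j) _ (hW01 (j+1)) h
          have h2 : 0 ≤ L * (γ 0 * (ρ n j - m)) :=
            mul_nonneg hL (mul_nonneg (hγnn 0) (by linarith))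
          linarith
        · have h3 : V (W n (j+1)) - V (W n j) ≤ L * (γ 0 * (ρ n j - m)) :=
            calc V (W n (j+1)) - V (W n j) ≤ |V (W n (j+1)) - V (W n j)| := le_abs_self _
              _ ≤ L * |W n (j+1) - W n j| := hVlip _ _
              _ = L * (W n j - W n (j+1)) := by
                  rw [abs_of_nonpos (by linarith), neg_sub]
              _ ≤ L * (γ 0 * (ρ n j - m)) := mul_le_mul_of_nonneg_left hDlo hL
          linarith
      rw [hupd n j]
      have hγ0nn := hγnn 0
      constructor
      · -- lower bound
        have g1 : lam * (m * V (W n j)) ≤ lam * (ρ n (j-1) * V (W n j)) :=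
          mul_le_mul_of_nonneg_left (mul_le_mul_of_nonneg_right hj1m hV0nn) hlam.le
        have g2 : -(L * (ρ n j - m)) ≤ m * (V (W n j) - V (W n (j+1))) := by
          have h1 : m * (-(L * (γ 0 * (ρ n j - m)))) ≤ m * (V (W n j) - V (W n (j+1))) :=
            mul_le_mul_of_nonneg_left hVd2 hm0
          have h2 : 0 ≤ L * (ρ n j - m) := mul_nonneg hL (by linarith)
          nlinarith [mul_le_one₀ (hm0.trans (hjm.trans (hjM.trans hMx1)) |> fun _ => hMx1) hγ0nn hγ0le1]
        have g2' : m * γ 0 ≤ 1 := mul_le_one₀ (by linarith) hγ0nn hγ0le1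
        have g2s : lam * (-(L * (ρ n j - m))) ≤ lam * (m * (V (W n j) - V (W n (j+1)))) :=
          mul_le_mul_of_nonneg_left g2 hlam.le
        have g3s : lam * ((ρ n j - m) * V (W n (j+1))) ≤ lam * ((ρ n j - m) * M) :=
          mul_le_mul_of_nonneg_left
            (mul_le_mul_of_nonneg_left hV1M (by linarith)) hlam.le
        have g4 : lam * ((M + L) * (ρ n j - m)) ≤ 1 * (ρ n j - m) := by
          calc lam * ((M + L) * (ρ n j - m)) = (lam * (M + L)) * (ρ n j - m) := by ring
            _ ≤ 1 * (ρ n j - m) := mul_le_mul_of_nonneg_right hCFL (by linarith)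
        nlinarith [g1, g2s, g3s, g4]
      · -- upper bound
        have g1 : lam * (ρ n (j-1) * V (W n j)) ≤ lam * (Mx * V (W n j)) :=
          mul_le_mul_of_nonneg_left (mul_le_mul_of_nonneg_right hj1M hV0nn) hlam.le
        have g2 : Mx * (V (W n j) - V (W n (j+1))) ≤ L * (Mx - ρ n j) := by
          have hMx0 : 0 ≤ Mx := hm0.trans hmMx
          have h1 : Mx * (V (W n j) - V (W n (j+1))) ≤ Mx * (L * (γ 0 * (Mx - ρ n j))) :=
            mul_le_mul_of_nonneg_left hVd1 hMx0
          have h2 : Mx * γ 0 ≤ 1 := mul_le_one₀ hMx1 hγ0nn hγ0le1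
          have h3 : 0 ≤ L * (Mx - ρ n j) := mul_nonneg hL (by linarith)
          nlinarith
        have g2s : lam * (Mx * (V (W n j) - V (W n (j+1)))) ≤ lam * (L * (Mx - ρ n j)) :=
          mul_le_mul_of_nonneg_left g2 hlam.le
        have g3s : lam * ((Mx - ρ n j) * V (W n (j+1))) ≤ lam * ((Mx - ρ n j) * M) :=
          mul_le_mul_of_nonneg_left
            (mul_le_mul_of_nonneg_left hV1M (by linarith)) hlam.le
        have g4 : lam * ((M + L) * (Mx - ρ n j)) ≤ 1 * (Mx - ρ n j) := by
          calc lam * ((M + L) * (Mx - ρ n j)) = (lam * (M + L)) * (Mx - ρ n j) := by ring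
            _ ≤ 1 * (Mx - ρ n j) := mul_le_mul_of_nonneg_right hCFL (by linarith)
        nlinarith [g1, g2s, g3s, g4]
  refine ⟨fun n j => hWb n (key n) j, ?_⟩
  intro hsum0
  -- conservation for ρ
  have hρcons : ∀ n : ℕ, Summable (fun j : ℤ => ρ n j) ∧ ∑' j : ℤ, ρ n j = ∑' j : ℤ, ρ0 j := by
    intro n
    induction n with
    | zero =>
      have h0 : (fun j : ℤ => ρ 0 j) = fun j : ℤ => ρ0 j := funext hinit
      rw [h0]
      exact ⟨hsum0, rfl⟩
    | succ n ih =>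
      obtain ⟨hs, he⟩ := ih
      have hρnn : ∀ i, 0 ≤ ρ n i := fun i => hm0.trans ((key n) i).1
      have hWmem := hWb n (key n)
      have hW01 : ∀ i, W n i ∈ Set.Icc (0:ℝ) 1 :=
        fun i => ⟨hm0.trans (hWmem i).1, (hWmem i).2.trans hMx1⟩
      have hVW : ∀ i : ℤ, V (W n i) ∈ Set.Icc (0:ℝ) M := fun i => hVbd _ (hW01 i)
      set A := fun j : ℤ => ρ n (j-1) * V (W n j) with hA
      set B := fun j : ℤ => ρ n j * V (W n (j+1)) with hB
      have hshift : Summable (fun j : ℤ => ρ n (j-1)) := (Equiv.subRight (1:ℤ)).summable_iff.2 hs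
      have hsA : Summable A := by
        apply Summable.of_nonneg_of_le (fun j => mul_nonneg (hρnn _) (hVW j).1)
          (fun j => mul_le_mul_of_nonneg_left (hVW j).2 (hρnn _))
        exact hshift.mul_right M
      have hsB : Summable B := by
        apply Summable.of_nonneg_of_le (fun j => mul_nonneg (hρnn _) (hVW _).1)
          (fun j => mul_le_mul_of_nonneg_left (hVW _).2 (hρnn _))
        exact hs.mul_right M
      have hAB : ∑' j : ℤ, B j = ∑' j : ℤ, A j := by
        have h1 : ∀ j : ℤ, B j = A (j+1) := by
          intro j; simp only [hA, hB, add_sub_cancel_right]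
        calc ∑' j : ℤ, B j = ∑' j : ℤ, A (j+1) := tsum_congr h1
          _ = ∑' j : ℤ, A j := (Equiv.addRight (1:ℤ)).tsum_eq A
      have hrw : (fun j : ℤ => ρ (n+1) j) = fun j : ℤ => ρ n j + lam * (A j - B j) :=
        funext (hupd n)
      constructor
      · rw [hrw]; exact hs.add ((hsA.sub hsB).mul_left lam)
      · rw [hrw, Summable.tsum_add hs ((hsA.sub hsB).mul_left lam), tsum_mul_left,
          Summable.tsum_sub hsA hsB, hAB]
        simp [he]
  -- conservation for W
  intro n
  obtain ⟨hρs, hρt⟩ := hρcons n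
  have hρnn : ∀ i, 0 ≤ ρ n i := fun i => hm0.trans ((key n) i).1
  have hf : Summable (fun p : ℕ × ℤ => γ p.1 * ρ n p.2) :=
    hγsum.summable.mul_of_nonneg hρs hγnn hρnn
  let e : ℤ × ℕ ≃ ℕ × ℤ :=
    ⟨fun p => (p.2, p.1 + (p.2:ℤ)), fun q => (q.2 - (q.1:ℤ), q.1),
      fun p => by simp, fun q => by simp⟩
  have hG : Summable ((fun p : ℕ × ℤ => γ p.1 * ρ n p.2) ∘ e) := e.summable_iff.2 hf
  have hfib : ∀ j : ℤ, HasSum (fun k : ℕ => ((fun p : ℕ × ℤ => γ p.1 * ρ n p.2) ∘ e) (j, k))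
      (W n j) := by
    intro j
    have := (hG.prod_factor j).hasSum
    rwa [hW n j]
  have hWsum : HasSum (fun j : ℤ => W n j)
      (∑' p : ℤ × ℕ, ((fun p : ℕ × ℤ => γ p.1 * ρ n p.2) ∘ e) p) :=
    hG.hasSum.prod_fiberwise hfib
  have hval : (∑' p : ℤ × ℕ, ((fun p : ℕ × ℤ => γ p.1 * ρ n p.2) ∘ e) p)
      = ∑' j : ℤ, ρ0 j := by
    have he2 : (∑' p : ℤ × ℕ, ((fun p : ℕ × ℤ => γ p.1 * ρ n p.2) ∘ e) p)
        = ∑' q : ℕ × ℤ, γ q.1 * ρ n q.2 := by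
      simpa [Function.comp] using e.tsum_eq (fun p : ℕ × ℤ => γ p.1 * ρ n p.2)
    rw [he2]
    have hmul : HasSum (fun p : ℕ × ℤ => γ p.1 * ρ n p.2) (1 * ∑' j : ℤ, ρ n j) :=
      hγsum.mul hρs.hasSum hf
    rw [hmul.tsum_eq, one_mul, hρt]
  exact ⟨hWsum.summable, by rw [hWsum.tsum_eq, hval]⟩
end

section
/- Time-step update formula for the discrete nonlocal impact: assume the CFL condition λ(M + L) ≤ 1. Then for every n ∈ ℕ and j ∈ ℤ the series ∑_{k=0}^∞ γ_k (ρⁿ_{j+k−1} V(Wⁿ_{j+k}) − ρⁿ_{j+k} V(Wⁿ_{j+k+1})) converges absolutely and W^{n+1}_j = Wⁿ_j + λ ∑_{k=0}^∞ γ_k (ρⁿ_{j+k−1} V(Wⁿ_{j+k}) − ρⁿ_{j+k} V(Wⁿ_{j+k+1})). -/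
/-- Time-step update formula for the discrete nonlocal impact: the series
defining the update converges absolutely and
`W^{n+1}_j = Wⁿ_j + λ ∑ₖ γₖ (ρⁿ_{j+k−1} V(Wⁿ_{j+k}) − ρⁿ_{j+k} V(Wⁿ_{j+k+1}))`. -/
theorem godunov_W_update
    (lam M L : ℝ) (hlam : 0 < lam) (hM : 0 ≤ M) (hL : 0 ≤ L)
    (V : ℝ → ℝ)
    (hVlip : ∀ x y : ℝ, |V x - V y| ≤ L * |x - y|)
    (hVmono : ∀ x ∈ Set.Icc (0:ℝ) 1, ∀ y ∈ Set.Icc (0:ℝ) 1, x ≤ y → V y ≤ V x)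
    (hVbd : ∀ ξ ∈ Set.Icc (0:ℝ) 1, V ξ ∈ Set.Icc (0:ℝ) M)
    (γ : ℕ → ℝ)
    (hγnn : ∀ k, 0 ≤ γ k) (hγmono : ∀ k, γ (k+1) ≤ γ k)
    (hγsum : HasSum γ 1)
    (ρ0 : ℤ → ℝ) (hρ0 : ∀ j, ρ0 j ∈ Set.Icc (0:ℝ) 1)
    (ρ W : ℕ → ℤ → ℝ)
    (hinit : ∀ j : ℤ, ρ 0 j = ρ0 j)
    (hW : ∀ (n : ℕ) (j : ℤ), W n j = ∑' k : ℕ, γ k * ρ n (j + (k:ℤ)))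
    (hupd : ∀ (n : ℕ) (j : ℤ),
      ρ (n+1) j = ρ n j + lam * (ρ n (j-1) * V (W n j) - ρ n j * V (W n (j+1))))
    (hCFL : lam * (M + L) ≤ 1) :
    ∀ (n : ℕ) (j : ℤ),
      (Summable fun k : ℕ =>
        |γ k * (ρ n (j + (k:ℤ) - 1) * V (W n (j + (k:ℤ))) -
                ρ n (j + (k:ℤ)) * V (W n (j + (k:ℤ) + 1)))|) ∧
      W (n+1) j = W n j + lam * ∑' k : ℕ,
        γ k * (ρ n (j + (k:ℤ) - 1) * V (W n (j + (k:ℤ))) -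
               ρ n (j + (k:ℤ)) * V (W n (j + (k:ℤ) + 1))) := by
  have hγ0 : γ 0 ≤ 1 := le_hasSum hγsum 0 (fun k _ => hγnn k)
  have hγtend : Filter.Tendsto γ Filter.atTop (nhds 0) :=
    hγsum.summable.tendsto_atTop_zero
  have htel : HasSum (fun k => γ k - γ (k+1)) (γ 0) := by
    rw [hasSum_iff_tendsto_nat_of_nonneg (fun k => sub_nonneg.2 (hγmono k))]
    simp only [Finset.sum_range_sub' γ]
    simpa using tendsto_const_nhds.sub hγtend
  -- summability of the W-series given bounds at level n
  have hs : ∀ n, (∀ i : ℤ, ρ n i ∈ Set.Icc (0:ℝ) 1) →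
      ∀ j : ℤ, Summable (fun k : ℕ => γ k * ρ n (j + (k:ℤ))) := by
    intro n hb j
    refine Summable.of_nonneg_of_le (fun k => mul_nonneg (hγnn k) (hb _).1)
      (fun k => mul_le_of_le_one_right (hγnn k) (hb _).2) hγsum.summable
  have hWmem : ∀ n, (∀ i : ℤ, ρ n i ∈ Set.Icc (0:ℝ) 1) →
      ∀ j : ℤ, W n j ∈ Set.Icc (0:ℝ) 1 := by
    intro n hb j
    rw [hW]
    constructor
    · exact tsum_nonneg fun k => mul_nonneg (hγnn k) (hb _).1
    · calc ∑' k : ℕ, γ k * ρ n (j + (k:ℤ))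
          ≤ ∑' k : ℕ, γ k :=
            Summable.tsum_le_tsum (fun k => mul_le_of_le_one_right (hγnn k) (hb _).2)
              (hs n hb j) hγsum.summable
        _ = 1 := hγsum.tsum_eq
  -- invariance: 0 ≤ ρ ≤ 1
  have key : ∀ n, ∀ j : ℤ, ρ n j ∈ Set.Icc (0:ℝ) 1 := by
    intro n
    induction n with
    | zero => intro j; rw [hinit]; exact hρ0 j
    | succ n ih =>
      have hWd : ∀ j : ℤ, W n (j+1) - W n j ≤ 1 - ρ n j := by
        intro j
        have hshift : W n j = γ 0 * ρ n j + ∑' k : ℕ, γ (k+1) * ρ n (j + 1 + (k:ℤ)) := by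
          rw [hW n j, Summable.tsum_eq_zero_add (hs n ih j)]
          congr 1
          · norm_num
          · refine tsum_congr fun k => ?_
            congr 2
            push_cast
            ring
        have hsB : Summable (fun k : ℕ => γ (k+1) * ρ n (j + 1 + (k:ℤ))) := by
          refine Summable.of_nonneg_of_le (fun k => mul_nonneg (hγnn (k+1)) (ih _).1)
            (fun k => le_trans (mul_le_of_le_one_right (hγnn (k+1)) (ih _).2) (hγmono k))
            hγsum.summable
        have hdiff : ∑' k : ℕ, (γ k * ρ n (j + 1 + (k:ℤ)) - γ (k+1) * ρ n (j + 1 + (k:ℤ)))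
            ≤ γ 0 := by
          have hterm : ∀ k : ℕ,
              γ k * ρ n (j + 1 + (k:ℤ)) - γ (k+1) * ρ n (j + 1 + (k:ℤ)) ≤ γ k - γ (k+1) := by
            intro k
            rw [← sub_mul]
            exact mul_le_of_le_one_right (sub_nonneg.2 (hγmono k)) (ih _).2
          calc ∑' k : ℕ, (γ k * ρ n (j + 1 + (k:ℤ)) - γ (k+1) * ρ n (j + 1 + (k:ℤ)))
              ≤ ∑' k : ℕ, (γ k - γ (k+1)) :=
                Summable.tsum_le_tsum hterm ((hs n ih (j+1)).sub hsB) htel.summable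
            _ = γ 0 := htel.tsum_eq
        have hsub : W n (j+1) - (∑' k : ℕ, γ (k+1) * ρ n (j + 1 + (k:ℤ)))
            = ∑' k : ℕ, (γ k * ρ n (j + 1 + (k:ℤ)) - γ (k+1) * ρ n (j + 1 + (k:ℤ))) := by
          rw [hW n (j+1), ← Summable.tsum_sub (hs n ih (j+1)) hsB]
        have hbj := ih j
        have := hbj.1
        have := hbj.2
        nlinarith [hdiff, hsub, hshift, hγnn 0, hbj.1, hbj.2]
      intro j
      rw [hupd]
      have ha := ih (j-1)
      have hb := ih j
      have hv1 := hVbd _ (hWmem n ih j)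
      have hv2 := hVbd _ (hWmem n ih (j+1))
      have hd := hWd j
      have hv12 : V (W n j) - V (W n (j+1)) ≤ L * (1 - ρ n j) := by
        rcases le_or_gt (W n (j+1)) (W n j) with h | h
        · have h0 := hVmono _ (hWmem n ih (j+1)) _ (hWmem n ih j) h
          nlinarith [mul_nonneg hL (by linarith [hb.2] : (0:ℝ) ≤ 1 - ρ n j)]
        · have hlip := hVlip (W n j) (W n (j+1))
          have habs : |W n j - W n (j+1)| = W n (j+1) - W n j := by
            rw [abs_of_neg (by linarith)]; ring
          rw [habs] at hlip
          have := le_abs_self (V (W n j) - V (W n (j+1)))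
          nlinarith [mul_le_mul_of_nonneg_left hd hL]
      have hlv2 : lam * V (W n (j+1)) ≤ 1 := by
        nlinarith [hv2.2, mul_nonneg hlam.le hL]
      constructor
      · nlinarith [mul_nonneg (mul_nonneg hlam.le ha.1) hv1.1,
          mul_nonneg hb.1 (sub_nonneg.2 hlv2)]
      · have h1 : lam * (V (W n j) - V (W n (j+1))) ≤ lam * (L * (1 - ρ n j)) :=
          mul_le_mul_of_nonneg_left hv12 hlam.le
        have h2 : lam * (M + L) * (1 - ρ n j) ≤ 1 * (1 - ρ n j) :=
          mul_le_mul_of_nonneg_right hCFL (by linarith [hb.2])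
        nlinarith [mul_nonneg (mul_nonneg hlam.le hv1.1) (sub_nonneg.2 ha.2),
          mul_le_mul_of_nonneg_right hv2.2
            (mul_nonneg hlam.le (sub_nonneg.2 hb.2)),
          mul_nonneg (mul_nonneg hlam.le hv2.1) (sub_nonneg.2 hb.2)]
  -- main statement
  intro n j
  have hbd := key n
  have hWm := hWmem n hbd
  have hdbd : ∀ k : ℕ,
      |γ k * (ρ n (j + (k:ℤ) - 1) * V (W n (j + (k:ℤ))) -
        ρ n (j + (k:ℤ)) * V (W n (j + (k:ℤ) + 1)))| ≤ M * γ k := by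
    intro k
    have h1 : ρ n (j + (k:ℤ) - 1) * V (W n (j + (k:ℤ))) ∈ Set.Icc (0:ℝ) M := by
      have hv := hVbd _ (hWm (j + (k:ℤ)))
      have hr := hbd (j + (k:ℤ) - 1)
      constructor
      · exact mul_nonneg hr.1 hv.1
      · calc ρ n (j + (k:ℤ) - 1) * V (W n (j + (k:ℤ))) ≤ 1 * V (W n (j + (k:ℤ))) :=
            mul_le_mul_of_nonneg_right hr.2 hv.1
          _ ≤ M := by linarith [hv.2]
    have h2 : ρ n (j + (k:ℤ)) * V (W n (j + (k:ℤ) + 1)) ∈ Set.Icc (0:ℝ) M := by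
      have hv := hVbd _ (hWm (j + (k:ℤ) + 1))
      have hr := hbd (j + (k:ℤ))
      constructor
      · exact mul_nonneg hr.1 hv.1
      · calc ρ n (j + (k:ℤ)) * V (W n (j + (k:ℤ) + 1)) ≤ 1 * V (W n (j + (k:ℤ) + 1)) :=
            mul_le_mul_of_nonneg_right hr.2 hv.1
          _ ≤ M := by linarith [hv.2]
    rw [abs_mul, abs_of_nonneg (hγnn k), mul_comm M (γ k)]
    refine mul_le_mul_of_nonneg_left ?_ (hγnn k)
    rw [abs_le]
    constructor
    · linarith [h1.1, h2.2]
    · linarith [h1.2, h2.1]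
  have habs : Summable (fun k : ℕ =>
      |γ k * (ρ n (j + (k:ℤ) - 1) * V (W n (j + (k:ℤ))) -
        ρ n (j + (k:ℤ)) * V (W n (j + (k:ℤ) + 1)))|) :=
    Summable.of_nonneg_of_le (fun k => abs_nonneg _) hdbd (hγsum.summable.mul_left M)
  refine ⟨habs, ?_⟩
  have hsd : Summable (fun k : ℕ =>
      γ k * (ρ n (j + (k:ℤ) - 1) * V (W n (j + (k:ℤ))) -
        ρ n (j + (k:ℤ)) * V (W n (j + (k:ℤ) + 1)))) := habs.of_abs
  have heq : ∀ k : ℕ, γ k * ρ (n+1) (j + (k:ℤ)) =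
      γ k * ρ n (j + (k:ℤ)) + lam *
        (γ k * (ρ n (j + (k:ℤ) - 1) * V (W n (j + (k:ℤ))) -
          ρ n (j + (k:ℤ)) * V (W n (j + (k:ℤ) + 1)))) := by
    intro k
    rw [hupd n (j + (k:ℤ))]
    ring
  rw [hW (n+1) j, hW n j]
  calc ∑' k : ℕ, γ k * ρ (n+1) (j + (k:ℤ))
      = ∑' k : ℕ, (γ k * ρ n (j + (k:ℤ)) + lam *
        (γ k * (ρ n (j + (k:ℤ) - 1) * V (W n (j + (k:ℤ))) -
          ρ n (j + (k:ℤ)) * V (W n (j + (k:ℤ) + 1))))) := tsum_congr heq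
    _ = (∑' k : ℕ, γ k * ρ n (j + (k:ℤ))) + ∑' k : ℕ, lam *
        (γ k * (ρ n (j + (k:ℤ) - 1) * V (W n (j + (k:ℤ))) -
          ρ n (j + (k:ℤ)) * V (W n (j + (k:ℤ) + 1)))) :=
        Summable.tsum_add (hs n hbd j) (hsd.mul_left lam)
    _ = _ := by rw [tsum_mul_left]
end

section
/- Weighted summation-by-parts inequality: ∑_{k=0}^∞ (γ_k − γ_{k+1}) ∑_{j∈ℤ} ρ_{j+k} |V(W_{j+k+1}) − V(W_j)| ≤ ∑_{j∈ℤ} W_j |V(W_{j+1}) − V(W_j)|, where all sums of nonnegative terms are valued in [0,∞]. -/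
open scoped ENNReal

/-!
Telescoping bounds `|V(W_{j+k+1}) − V(W_j)|` by the `k + 1` consecutive increments
`D_{j+i} = |V(W_{j+i+1}) − V(W_{j+i})|`, `i ≤ k`; after shifting `j`, the `k`-th inner sum is at
most `∑_{l ≤ k} S_l` with `S_l = ∑_m ρ_{m+l} D_m`. Exchanging the order of summation (Abel
summation, legitimate in `[0,∞]`), the weight of `S_l` is `∑_{k ≥ l} (γ_k − γ_{k+1}) = γ_l`,
and `∑_l γ_l ρ_{m+l} = W_m`.
-/

open Finset Filter Topology

theorem Antitone.hasSum_sub_succ {f : ℕ → ℝ} {c : ℝ} (hf : Antitone f)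
    (hlim : Tendsto f atTop (𝓝 c)) : HasSum (fun n ↦ f n - f (n + 1)) (f 0 - c) := by
  rw [hasSum_iff_tendsto_nat_of_nonneg (fun n ↦ sub_nonneg.2 (hf n.le_succ))]
  have hsum : ∀ n, ∑ i ∈ range n, (f i - f (i + 1)) = f 0 - f n := fun n ↦ by
    rw [← neg_sub, ← Finset.sum_range_sub, ← Finset.sum_neg_distrib]; simp
  simpa only [hsum] using tendsto_const_nhds.sub hlim

theorem ENNReal.tsum_ofReal_sub_succ_shift {γ : ℕ → ℝ} (hγ : Antitone γ) (hsum : Summable γ)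
    (l : ℕ) : ∑' n, ENNReal.ofReal (γ (l + n) - γ (l + n + 1)) = ENNReal.ofReal (γ l) := by
  have hshift : Antitone fun n ↦ γ (l + n) := fun a b hab ↦ hγ (by omega)
  have hlim : Tendsto (fun n ↦ γ (l + n)) atTop (𝓝 0) :=
    hsum.tendsto_atTop_zero.comp (tendsto_atTop_mono (fun n ↦ Nat.le_add_left n l) tendsto_id)
  have h := hshift.hasSum_sub_succ hlim
  simp only [add_zero, sub_zero, ← add_assoc] at h
  rw [← ENNReal.ofReal_tsum_of_nonneg (fun n ↦ sub_nonneg.2 (hγ (by omega))) h.summable,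
    h.tsum_eq]

theorem ENNReal.tsum_mul_sum_range_succ (a S : ℕ → ℝ≥0∞) :
    ∑' k, a k * ∑ l ∈ range (k + 1), S l = ∑' l, (∑' n, a (l + n)) * S l := by
  calc ∑' k, a k * ∑ l ∈ range (k + 1), S l
      = ∑' k, ∑ p ∈ antidiagonal k, a (p.1 + p.2) * S p.1 := by
        refine tsum_congr fun k ↦ ?_
        rw [Finset.mul_sum, ← Nat.sum_antidiagonal_eq_sum_range_succ fun l _ ↦ a k * S l]
        exact Finset.sum_congr rfl fun p hp ↦ by rw [mem_antidiagonal.1 hp]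
    _ = ∑' p : ℕ × ℕ, a (p.1 + p.2) * S p.1 := by
        rw [← HasAntidiagonal.sigmaAntidiagonalEquivProd.tsum_eq, ENNReal.tsum_sigma']
        exact tsum_congr fun k ↦ (Finset.tsum_subtype _ fun p : ℕ × ℕ ↦ a (p.1 + p.2) * S p.1).symm
    _ = ∑' l, (∑' n, a (l + n)) * S l := by
        rw [ENNReal.tsum_prod (f := fun l n ↦ a (l + n) * S l)]
        exact tsum_congr fun l ↦ ENNReal.tsum_mul_right

theorem abs_sub_le_sum_range_abs_sub_succ {G : Type*} [AddCommGroup G] [LinearOrder G]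
    [IsOrderedAddMonoid G] (g : ℤ → G) (j : ℤ) (n : ℕ) :
    |g (j + n) - g j| ≤ ∑ i ∈ range n, |g (j + i + 1) - g (j + i)| := by
  have h := Finset.sum_range_sub (fun i : ℕ ↦ g (j + i)) n
  simp only [Nat.cast_add, Nat.cast_one, Nat.cast_zero, add_zero, ← add_assoc] at h
  exact h ▸ abs_sum_le_sum_abs _ _

theorem tsum_mul_ofReal_abs_sub_le_sum_range (r : ℤ → ℝ≥0∞) (g : ℤ → ℝ) (k : ℕ) :
    ∑' j : ℤ, r (j + k) * ENNReal.ofReal |g (j + k + 1) - g j| ≤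
      ∑ l ∈ range (k + 1), ∑' m : ℤ, r (m + l) * ENNReal.ofReal |g (m + 1) - g m| := by
  set D : ℤ → ℝ≥0∞ := fun m ↦ ENNReal.ofReal |g (m + 1) - g m|
  have hD (j : ℤ) : ENNReal.ofReal |g (j + k + 1) - g j| ≤ ∑ i ∈ range (k + 1), D (j + i) := by
    rw [← ENNReal.ofReal_sum_of_nonneg fun _ _ ↦ abs_nonneg _]
    gcongr
    simpa [add_assoc] using abs_sub_le_sum_range_abs_sub_succ g j (k + 1)
  calc ∑' j : ℤ, r (j + k) * ENNReal.ofReal |g (j + k + 1) - g j|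
      ≤ ∑' j : ℤ, ∑ i ∈ range (k + 1), r (j + k) * D (j + i) :=
        ENNReal.tsum_le_tsum fun j ↦ by rw [← Finset.mul_sum]; gcongr; exact hD j
    _ = ∑ i ∈ range (k + 1), ∑' j : ℤ, r (j + k) * D (j + i) :=
        Summable.tsum_finsetSum fun _ _ ↦ ENNReal.summable
    _ = ∑ i ∈ range (k + 1), ∑' m : ℤ, r (m + (k - i : ℕ)) * D m := by
        refine sum_congr rfl fun i hi ↦ ?_
        rw [← (Equiv.subRight (i : ℤ)).tsum_eq]
        refine tsum_congr fun m ↦ ?_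
        have hik : i ≤ k := Nat.lt_succ_iff.mp (mem_range.mp hi)
        simp only [Equiv.subRight_apply, sub_add_cancel, Nat.cast_sub hik]
        ring_nf
    _ = ∑ l ∈ range (k + 1), ∑' m : ℤ, r (m + l) * D m := by
        simpa using sum_range_reflect (fun l ↦ ∑' m : ℤ, r (m + l) * D m) (k + 1)

theorem ENNReal.ofReal_tsum_mul_of_mem_Icc {γ ρ : ℕ → ℝ} (hγ : ∀ k, 0 ≤ γ k) (hsum : Summable γ)
    (hρ : ∀ k, ρ k ∈ Set.Icc (0 : ℝ) 1) :
    ENNReal.ofReal (∑' k, γ k * ρ k) = ∑' k, ENNReal.ofReal (γ k) * ENNReal.ofReal (ρ k) := by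
  have hnn (k : ℕ) : 0 ≤ γ k * ρ k := mul_nonneg (hγ k) (hρ k).1
  have hle (k : ℕ) : γ k * ρ k ≤ γ k := mul_le_of_le_one_right (hγ k) (hρ k).2
  rw [ENNReal.ofReal_tsum_of_nonneg hnn (hsum.of_nonneg_of_le hnn hle)]
  exact tsum_congr fun k ↦ ENNReal.ofReal_mul (hγ k)

theorem tsum_ofReal_sub_succ_mul_le {γ : ℕ → ℝ} (hγ : Antitone γ) (hsum : Summable γ)
    (r : ℤ → ℝ≥0∞) (g : ℤ → ℝ) :
    ∑' k : ℕ, ENNReal.ofReal (γ k - γ (k + 1)) *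
        ∑' j : ℤ, r (j + k) * ENNReal.ofReal |g (j + k + 1) - g j| ≤
      ∑' m : ℤ, (∑' l : ℕ, ENNReal.ofReal (γ l) * r (m + l)) *
        ENNReal.ofReal |g (m + 1) - g m| := by
  set D : ℤ → ℝ≥0∞ := fun m ↦ ENNReal.ofReal |g (m + 1) - g m|
  calc _ ≤ ∑' k : ℕ, ENNReal.ofReal (γ k - γ (k + 1)) *
          ∑ l ∈ range (k + 1), ∑' m : ℤ, r (m + l) * D m := by
        gcongr with k
        exact tsum_mul_ofReal_abs_sub_le_sum_range r g k
    _ = ∑' l : ℕ, ENNReal.ofReal (γ l) * ∑' m : ℤ, r (m + l) * D m := by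
        simp only [ENNReal.tsum_mul_sum_range_succ,
          ENNReal.tsum_ofReal_sub_succ_shift hγ hsum]
    _ = ∑' m : ℤ, (∑' l : ℕ, ENNReal.ofReal (γ l) * r (m + l)) * D m := by
        simp only [← ENNReal.tsum_mul_left, ← ENNReal.tsum_mul_right, mul_assoc]
        exact ENNReal.tsum_comm

theorem weighted_summation_by_parts_inequality_general
    (γ : ℕ → ℝ) (hγnn : ∀ k, 0 ≤ γ k) (hγmono : ∀ k, γ (k+1) ≤ γ k)
    (hγsum : HasSum γ 1)
    (ρ : ℤ → ℝ) (hρ : ∀ j, ρ j ∈ Set.Icc (0:ℝ) 1)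
    (W : ℤ → ℝ) (hW : ∀ j : ℤ, W j = ∑' k : ℕ, γ k * ρ (j + (k:ℤ)))
    (V : ℝ → ℝ) :
    ∑' k : ℕ, ENNReal.ofReal (γ k - γ (k+1)) *
        ∑' j : ℤ, ENNReal.ofReal (ρ (j + (k:ℤ)) * |V (W (j + (k:ℤ) + 1)) - V (W j)|) ≤
    ∑' j : ℤ, ENNReal.ofReal (W j * |V (W (j+1)) - V (W j)|) := by
  have hW' (m : ℤ) :
      ENNReal.ofReal (W m) = ∑' l : ℕ, ENNReal.ofReal (γ l) * ENNReal.ofReal (ρ (m + l)) := by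
    rw [hW m, ENNReal.ofReal_tsum_mul_of_mem_Icc hγnn hγsum.summable fun k ↦ hρ _]
  simp only [ENNReal.ofReal_mul' (abs_nonneg _), hW']
  exact tsum_ofReal_sub_succ_mul_le (antitone_nat_of_succ_le hγmono) hγsum.summable
    (fun j ↦ ENNReal.ofReal (ρ j)) (fun j ↦ V (W j))

/-- Weighted summation-by-parts inequality:
`∑_k (γ_k − γ_{k+1}) ∑_j ρ_{j+k} |V(W_{j+k+1}) − V(W_j)| ≤ ∑_j W_j |V(W_{j+1}) − V(W_j)|`,
with all sums of nonnegative terms taken in `[0,∞]`. -/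
theorem weighted_summation_by_parts_inequality
    (γ : ℕ → ℝ) (hγnn : ∀ k, 0 ≤ γ k) (hγmono : ∀ k, γ (k+1) ≤ γ k)
    (hγsum : HasSum γ 1)
    (ρ : ℤ → ℝ) (hρ : ∀ j, ρ j ∈ Set.Icc (0:ℝ) 1)
    (W : ℤ → ℝ) (hW : ∀ j : ℤ, W j = ∑' k : ℕ, γ k * ρ (j + (k:ℤ)))
    (V : ℝ → ℝ) (L : ℝ) (hL : 0 ≤ L)
    (hVlip : ∀ x y : ℝ, |V x - V y| ≤ L * |x - y|) :
    ∑' k : ℕ, ENNReal.ofReal (γ k - γ (k+1)) *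
        ∑' j : ℤ, ENNReal.ofReal (ρ (j + (k:ℤ)) * |V (W (j + (k:ℤ) + 1)) - V (W j)|) ≤
    ∑' j : ℤ, ENNReal.ofReal (W j * |V (W (j+1)) - V (W j)|) :=
  weighted_summation_by_parts_inequality_general γ hγnn hγmono hγsum ρ hρ W hW V
end

section
/- Spatial total variation diminishing property (convex weights): assume the strong CFL condition λ(M + 2L) ≤ 1 and that the weights are convex, i.e. γ_{k−1} + γ_{k+1} ≥ 2γ_k for all k ≥ 1. Then for every n ∈ ℕ: ∑_{j∈ℤ} |W^{n+1}_{j+1} − W^{n+1}_j| ≤ ∑_{j∈ℤ} |Wⁿ_{j+1} − Wⁿ_j| ≤ ∑_{j∈ℤ} |ρ⁰_{j+1} − ρ⁰_j|, where the sums of nonnegative terms are valued in [0,∞]. -/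
/-!
The new differences `Δ W^{n+1}` are written in incremental form: each is a combination of
`Δ W^n_{j-1}`, `Δ W^n_j` and the downstream differences `Δ W^n_{j+s+1}`. Two summations by parts
produce it. The first moves the difference of the numerical fluxes onto the weights; their second
differences `γ_k - 2γ_{k+1} + γ_{k+2}` then appear, and these are nonnegative exactly because the
weights are convex. The second turns the differences of `V(W^n)` into `Δ W^n` times chord slopes of
`V`, which lie in `[-L, 0]`. The CFL condition makes the diagonal coefficient nonnegative, and every
column of the coefficient matrix sums to one, so the ℓ¹ norm of the differences cannot grow.
The bound by the data is the same argument for `W⁰`, whose differences are averages of those of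
`ρ⁰`, and the scheme keeps `ρⁿ` in `[0, 1]`, which is what the bounds on `V` require.
-/

open Filter Topology Set
open scoped ENNReal fwdDiff

noncomputable section

theorem abs_le_one_of_mem_Icc {x : ℝ} (hx : x ∈ Icc (0 : ℝ) 1) : |x| ≤ 1 :=
  abs_le.2 ⟨by linarith [hx.1], hx.2⟩

def negDiff (a : ℕ → ℝ) (k : ℕ) : ℝ := a k - a (k + 1)

theorem hasSum_negDiff_add {a : ℕ → ℝ} (ha : Tendsto a atTop (𝓝 0))
    (hna : ∀ k, 0 ≤ negDiff a k) (m : ℕ) : HasSum (fun k => negDiff a (k + m)) (a m) := by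
  refine (hasSum_iff_tendsto_nat_of_nonneg (fun k => hna _) _).2 ?_
  have hsum : ∀ n, ∑ k ∈ Finset.range n, negDiff a (k + m) = a m - a (n + m) := fun n => by
    simpa [negDiff, add_right_comm _ 1 m] using Finset.sum_range_sub' (fun k => a (k + m)) n
  simpa [hsum] using tendsto_const_nhds.sub (ha.comp (tendsto_add_atTop_nat m))

def nonlocalAvg (a : ℕ → ℝ) (u : ℤ → ℝ) (j : ℤ) : ℝ := ∑' k : ℕ, a k * u (j + k)

section nonlocalAvg

variable {a : ℕ → ℝ} {u v : ℤ → ℝ} {C : ℝ}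

theorem summable_mul_of_abs_le {x : ℕ → ℝ} (ha : Summable a) (hx : ∀ k, |x k| ≤ C) :
    Summable fun k => a k * x k :=
  Summable.of_norm_bounded (ha.abs.mul_right C) fun k => by
    rw [Real.norm_eq_abs, abs_mul]
    exact mul_le_mul_of_nonneg_left (hx k) (abs_nonneg _)

theorem nonlocalAvg_eq_add_shift (ha : Summable a) (hu : ∀ j, |u j| ≤ C) (j : ℤ) :
    nonlocalAvg a u j = a 0 * u j + nonlocalAvg (fun k => a (k + 1)) u (j + 1) := by
  rw [nonlocalAvg, (summable_mul_of_abs_le ha fun k => hu (j + k)).tsum_eq_zero_add]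
  simp only [nonlocalAvg, Nat.cast_zero, add_zero, Nat.cast_succ, add_assoc, add_comm (1 : ℤ)]

theorem nonlocalAvg_succ_sub (ha : Summable a) (hu : ∀ j, |u j| ≤ C) (j : ℤ) :
    nonlocalAvg a u (j + 1) - nonlocalAvg a u j = ∑' k : ℕ, a k * (u (j + k + 1) - u (j + k)) := by
  rw [nonlocalAvg, nonlocalAvg, ← (summable_mul_of_abs_le ha fun k => hu (j + 1 + k)).tsum_sub
    (summable_mul_of_abs_le ha fun k => hu (j + k))]
  exact tsum_congr fun k => by ring_nf

theorem nonlocalAvg_negDiff (ha : Summable a) (hu : ∀ j, |u j| ≤ C) (j : ℤ) :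
    nonlocalAvg (negDiff a) u (j + 1) =
      a 0 * u j + nonlocalAvg a u (j + 1) - nonlocalAvg a u j := by
  have hsplit : nonlocalAvg (negDiff a) u (j + 1) =
      nonlocalAvg a u (j + 1) - nonlocalAvg (fun k => a (k + 1)) u (j + 1) := by
    rw [nonlocalAvg, nonlocalAvg, nonlocalAvg,
      ← (summable_mul_of_abs_le ha fun k => hu (j + 1 + k)).tsum_sub
        (summable_mul_of_abs_le ((summable_nat_add_iff 1).2 ha) fun k => hu (j + 1 + k))]
    exact tsum_congr fun k => sub_mul _ _ _
  rw [hsplit, nonlocalAvg_eq_add_shift ha hu j]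
  ring

theorem nonlocalAvg_add_mul_sub_shift (ha : Summable a) (hu : ∀ j, |u j| ≤ C) {C' : ℝ}
    (hv : ∀ j, |v j| ≤ C') (t : ℝ) (j : ℤ) :
    nonlocalAvg a (fun c => u c + t * (v c - v (c + 1))) j =
      nonlocalAvg a u j + t * (nonlocalAvg a v j - nonlocalAvg a v (j + 1)) := by
  have hu₀ := summable_mul_of_abs_le ha fun k => hu (j + k)
  have hv₀ := summable_mul_of_abs_le ha fun k => hv (j + k)
  have hv₁ := summable_mul_of_abs_le ha fun k => hv (j + 1 + k)
  rw [nonlocalAvg, nonlocalAvg, nonlocalAvg, nonlocalAvg, ← hv₀.tsum_sub hv₁, ← tsum_mul_left,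
    ← hu₀.tsum_add ((hv₀.sub hv₁).mul_left t)]
  exact tsum_congr fun k => by ring_nf

theorem nonlocalAvg_mem_Icc (ha : ∀ k, 0 ≤ a k) {s : ℝ} (has : HasSum a s)
    (hu : ∀ j, u j ∈ Icc (0 : ℝ) 1) (j : ℤ) : nonlocalAvg a u j ∈ Icc 0 s := by
  have hs : Summable fun k => a k * u (j + k) :=
    summable_mul_of_abs_le has.summable fun k => abs_le_one_of_mem_Icc (hu (j + k))
  refine ⟨tsum_nonneg fun k => mul_nonneg (ha k) (hu _).1, has.tsum_eq ▸ ?_⟩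
  exact hs.tsum_le_tsum (fun k => mul_le_of_le_one_right (ha k) (hu _).2) has.summable

theorem hasSum_nonlocalAvg_negDiff_add (ha : Summable a) (hna : ∀ k, 0 ≤ negDiff a k)
    (hu : ∀ j, |u j| ≤ C) (j : ℤ) :
    HasSum (fun s => nonlocalAvg (fun m => negDiff a (m + s)) u j) (nonlocalAvg a u j) := by
  have htail := hasSum_negDiff_add ha.tendsto_atTop_zero hna
  have hC : 0 ≤ C := (abs_nonneg _).trans (hu 0)
  have hbound : Summable fun p : ℕ × ℕ => negDiff a (p.2 + p.1) * C :=
    (summable_prod_of_nonneg fun p => mul_nonneg (hna _) hC).2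
      ⟨fun s => ((htail s).mul_right C).summable,
        by simpa only [tsum_mul_right, (htail _).tsum_eq] using ha.mul_right C⟩
  have hF : Summable (Function.uncurry fun s m => negDiff a (m + s) * u (j + m)) :=
    hbound.of_norm_bounded fun ⟨s, m⟩ => by
      rw [Function.uncurry_apply_pair, Real.norm_eq_abs, abs_mul, abs_of_nonneg (hna _)]
      exact mul_le_mul_of_nonneg_left (hu _) (hna _)
  have hval : ∑' (s : ℕ) (m : ℕ), negDiff a (m + s) * u (j + m) = nonlocalAvg a u j := by
    rw [← hF.tsum_comm, nonlocalAvg]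
    refine tsum_congr fun m => ?_
    rw [tsum_mul_right, ← (htail m).tsum_eq]
    simp only [add_comm]
  have h := hF.prod.hasSum
  simp only [Function.uncurry_apply_pair, hval] at h
  exact h

end nonlocalAvg

theorem tsum_le_tsum_of_stencil {d d' α β : ℤ → ℝ≥0∞} {κ : ℤ → ℕ → ℝ≥0∞}
    (hrow : ∀ j, d' j ≤ α j * d j + β j * d (j - 1) + ∑' s : ℕ, κ j s * d (j + s + 1))
    (hcol : ∀ c, α c + β (c + 1) + ∑' s : ℕ, κ (c - s - 1) s ≤ 1) : ∑' j, d' j ≤ ∑' j, d j := by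
  have hβ : ∑' j, β j * d (j - 1) = ∑' c, β (c + 1) * d c := by
    rw [← (Equiv.addRight (1 : ℤ)).tsum_eq]
    simp only [Equiv.coe_addRight, add_sub_cancel_right]
  have hκ : ∑' j, ∑' s : ℕ, κ j s * d (j + s + 1) = ∑' c, (∑' s : ℕ, κ (c - s - 1) s) * d c := by
    simp_rw [← ENNReal.tsum_mul_right]
    rw [ENNReal.tsum_comm, ENNReal.tsum_comm (f := fun c (s : ℕ) => κ (c - s - 1) s * d c)]
    refine tsum_congr fun s => ?_
    rw [← (Equiv.subRight ((s : ℤ) + 1)).tsum_eq]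
    refine tsum_congr fun c => ?_
    simp only [Equiv.subRight_apply, sub_add_eq_sub_sub]
    ring_nf
  calc ∑' j, d' j ≤ ∑' j, (α j * d j + β j * d (j - 1) + ∑' s : ℕ, κ j s * d (j + s + 1)) :=
        ENNReal.tsum_le_tsum hrow
    _ = ∑' c, (α c + β (c + 1) + ∑' s : ℕ, κ (c - s - 1) s) * d c := by
        rw [ENNReal.tsum_add, ENNReal.tsum_add, hβ, hκ, ← ENNReal.tsum_add, ← ENNReal.tsum_add]
        simp only [add_mul]
    _ ≤ ∑' c, d c := ENNReal.tsum_le_tsum fun c => mul_le_of_le_one_left' (hcol c)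

/-- `κ (c - s - 1) s` is the coefficient of `D c` in row `c - s - 1`, so the last condition says
that the coefficients of each `D c` add up to one. -/
def IsColumnStochastic (D' D : ℤ → ℝ) : Prop :=
  ∃ (α β : ℤ → ℝ) (κ : ℤ → ℕ → ℝ), (∀ j, 0 ≤ α j) ∧ (∀ j, 0 ≤ β j) ∧ (∀ j s, 0 ≤ κ j s) ∧
    (∀ j, D' j = α j * D j + β j * D (j - 1) + ∑' s : ℕ, κ j s * D (j + s + 1)) ∧
    ∀ c, HasSum (fun s : ℕ => κ (c - s - 1) s) (1 - α c - β (c + 1))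

theorem IsColumnStochastic.tsum_enorm_le {D' D : ℤ → ℝ} (h : IsColumnStochastic D' D) :
    ∑' j, ‖D' j‖ₑ ≤ ∑' j, ‖D j‖ₑ := by
  obtain ⟨α, β, κ, hα, hβ, hκ, hrow, hcol⟩ := h
  refine tsum_le_tsum_of_stencil (α := fun j => ‖α j‖ₑ) (β := fun j => ‖β j‖ₑ)
    (κ := fun j s => ‖κ j s‖ₑ) (fun j => ?_) (fun c => ?_)
  · rw [hrow j]
    refine ((enorm_add_le _ _).trans
      (add_le_add (enorm_add_le _ _) enorm_tsum_le_tsum_enorm)).trans ?_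
    simp only [enorm_mul, le_refl]
  · have hrest : 0 ≤ 1 - α c - β (c + 1) := (hcol c).nonneg fun s => hκ _ _
    simp only [Real.enorm_of_nonneg (hα _), Real.enorm_of_nonneg (hβ _),
      Real.enorm_of_nonneg (hκ _ _)]
    rw [← ENNReal.ofReal_tsum_of_nonneg (fun s => hκ _ _) (hcol c).summable, (hcol c).tsum_eq,
      ← ENNReal.ofReal_add (hα c) (hβ _), ← ENNReal.ofReal_add (add_nonneg (hα c) (hβ _)) hrest]
    simp

def godunovStep (lam : ℝ) (V : ℝ → ℝ) (γ : ℕ → ℝ) (q : ℤ → ℝ) (j : ℤ) : ℝ :=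
  q j + lam * (q (j - 1) * V (nonlocalAvg γ q j) - q j * V (nonlocalAvg γ q (j + 1)))

def chordSlope (V : ℝ → ℝ) (w : ℤ → ℝ) (c : ℤ) : ℝ := slope V (w c) (w (c + 1))

/-- `tailAvg γ q j s = ∑_{k ≥ s} (γ_k - 2γ_{k+1} + γ_{k+2}) q_{j+k+1}`. -/
def tailAvg (γ : ℕ → ℝ) (q : ℤ → ℝ) (j : ℤ) (s : ℕ) : ℝ :=
  nonlocalAvg (fun m => negDiff (negDiff γ) (m + s)) q (j + s + 1)

section Scheme

variable {lam L M : ℝ} {V : ℝ → ℝ} {γ : ℕ → ℝ} {q : ℤ → ℝ}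

theorem fwdDiff_comp_eq_chordSlope_mul (w : ℤ → ℝ) (c : ℤ) :
    Δ_[1] (fun c => V (w c)) c = chordSlope V w c * Δ_[1] w c := by
  rw [fwdDiff, fwdDiff, chordSlope, mul_comm, ← smul_eq_mul, sub_smul_slope, vsub_eq_sub]

theorem abs_chordSlope_le (hL : 0 ≤ L) (hV : ∀ x y, |V x - V y| ≤ L * |x - y|) (w : ℤ → ℝ)
    (c : ℤ) : |chordSlope V w c| ≤ L := by
  rw [chordSlope, slope_def_field, abs_div]
  rcases eq_or_ne (w (c + 1) - w c) 0 with h | h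
  · simp [h, hL]
  · rw [div_le_iff₀ (abs_pos.2 h)]
    exact hV _ _

theorem chordSlope_mem_Icc (hL : 0 ≤ L) (hVlip : ∀ x y, |V x - V y| ≤ L * |x - y|)
    (hVmono : AntitoneOn V (Icc 0 1)) {w : ℤ → ℝ} (hw : ∀ c, w c ∈ Icc (0 : ℝ) 1) (c : ℤ) :
    chordSlope V w c ∈ Icc (-L) 0 :=
  ⟨neg_le_of_abs_le (abs_chordSlope_le hL hVlip w c), hVmono.slope_nonpos (hw c) (hw (c + 1))⟩

theorem hasSum_negDiff (hγ : Summable γ) (hγmono : ∀ k, γ (k + 1) ≤ γ k) :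
    HasSum (negDiff γ) (γ 0) := by
  simpa using hasSum_negDiff_add hγ.tendsto_atTop_zero (fun k => sub_nonneg.2 (hγmono k)) 0

theorem nonlocalAvg_negDiff_mem_Icc (hγ : Summable γ) (hγmono : ∀ k, γ (k + 1) ≤ γ k)
    (hq : ∀ j, q j ∈ Icc (0 : ℝ) 1) (j : ℤ) : nonlocalAvg (negDiff γ) q j ∈ Icc 0 (γ 0) :=
  nonlocalAvg_mem_Icc (fun k => sub_nonneg.2 (hγmono k)) (hasSum_negDiff hγ hγmono) hq j

theorem negDiff_negDiff_nonneg (hconv : ∀ k, 2 * γ (k + 1) ≤ γ k + γ (k + 2)) (k : ℕ) :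
    0 ≤ negDiff (negDiff γ) k := by
  simp only [negDiff]
  linarith [hconv k]

theorem summable_negDiff (hγ : Summable γ) : Summable (negDiff γ) :=
  hγ.sub ((summable_nat_add_iff 1).2 hγ)

theorem tailAvg_mem_Icc (hγ : Summable γ) (hh : ∀ k, 0 ≤ negDiff (negDiff γ) k)
    (hq : ∀ j, q j ∈ Icc (0 : ℝ) 1) (j : ℤ) (s : ℕ) :
    tailAvg γ q j s ∈ Icc 0 (negDiff γ s) :=
  nonlocalAvg_mem_Icc (fun _ => hh _)
    (hasSum_negDiff_add (summable_negDiff hγ).tendsto_atTop_zero hh s) hq _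

theorem negDiff_tailAvg (hγ : Summable γ) (hq : ∀ j, q j ∈ Icc (0 : ℝ) 1) (j : ℤ) (s : ℕ) :
    negDiff (tailAvg γ q j) s = negDiff (negDiff γ) s * q (j + s + 1) := by
  have hh : Summable fun m => negDiff (negDiff γ) (m + s) :=
    (summable_nat_add_iff s).2 (summable_negDiff (summable_negDiff hγ))
  rw [negDiff, tailAvg, nonlocalAvg_eq_add_shift hh fun c => abs_le_one_of_mem_Icc (hq c),
    tailAvg]
  simp only [zero_add, Nat.cast_succ, add_right_comm _ 1 s, add_assoc]
  ring

theorem hasSum_tailAvg (hγ : Summable γ) (hh : ∀ k, 0 ≤ negDiff (negDiff γ) k)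
    (hq : ∀ j, q j ∈ Icc (0 : ℝ) 1) (c : ℤ) :
    HasSum (fun s : ℕ => tailAvg γ q (c - s - 1) s) (nonlocalAvg (negDiff γ) q c) := by
  convert hasSum_nonlocalAvg_negDiff_add (summable_negDiff hγ) hh
    (fun c => abs_le_one_of_mem_Icc (hq c)) c using 2 with s
  rw [tailAvg]
  ring_nf

theorem godunovStep_mem_Icc (hlam : 0 ≤ lam) (hL : 0 ≤ L)
    (hVlip : ∀ x y, |V x - V y| ≤ L * |x - y|) (hVmono : AntitoneOn V (Icc 0 1))
    (hVbd : MapsTo V (Icc 0 1) (Icc 0 M)) (hγnn : ∀ k, 0 ≤ γ k)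
    (hγmono : ∀ k, γ (k + 1) ≤ γ k) (hγsum : HasSum γ 1) (hCFL : lam * (M + L) ≤ 1)
    (hq : ∀ j, q j ∈ Icc (0 : ℝ) 1) (j : ℤ) : godunovStep lam V γ q j ∈ Icc 0 1 := by
  set w := nonlocalAvg γ q
  have hw : ∀ c, w c ∈ Icc (0 : ℝ) 1 := nonlocalAvg_mem_Icc hγnn hγsum hq
  have hv : ∀ c, V (w c) ∈ Icc 0 M := fun c => hVbd (hw c)
  have hσ := chordSlope_mem_Icc hL hVlip hVmono hw j
  have hγ0 : γ 0 ≤ 1 := le_hasSum hγsum 0 fun k _ => hγnn k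
  have hrise : Δ_[1] w j ≤ γ 0 * (1 - q j) := by
    have h : nonlocalAvg (negDiff γ) q (j + 1) = γ 0 * q j + w (j + 1) - w j :=
      nonlocalAvg_negDiff hγsum.summable (fun c => abs_le_one_of_mem_Icc (hq c)) j
    have hg := (nonlocalAvg_negDiff_mem_Icc hγsum.summable hγmono hq (j + 1)).2
    rw [fwdDiff]
    linarith
  have hdrop : V (w j) - V (w (j + 1)) ≤ L * (1 - q j) := by
    have h := fwdDiff_comp_eq_chordSlope_mul (V := V) w j
    simp only [fwdDiff] at h hrise
    nlinarith [mul_nonneg (neg_nonneg.2 hσ.2) (sub_nonneg.2 hrise),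
      mul_nonneg (neg_le_iff_add_nonneg.1 hσ.1) (mul_nonneg (hγnn 0) (sub_nonneg.2 (hq j).2)),
      mul_nonneg hL (mul_nonneg (sub_nonneg.2 hγ0) (sub_nonneg.2 (hq j).2))]
  obtain ⟨hqj0, hqj1⟩ := hq j
  obtain ⟨hqj'0, hqj'1⟩ := hq (j - 1)
  obtain ⟨hvj0, hvj1⟩ := hv j
  obtain ⟨hvj'0, hvj'1⟩ := hv (j + 1)
  constructor <;> simp only [godunovStep]
  · nlinarith [mul_nonneg hqj0 (sub_nonneg.2 (show lam * V (w (j + 1)) ≤ 1 by nlinarith)),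
      mul_nonneg hlam (mul_nonneg hqj'0 hvj0)]
  · nlinarith [mul_nonneg hlam (mul_nonneg (sub_nonneg.2 hqj'1) hvj0),
      mul_le_mul_of_nonneg_left hdrop hlam,
      mul_le_mul_of_nonneg_left (mul_le_mul_of_nonneg_right hvj'1 (sub_nonneg.2 hqj1)) hlam,
      mul_nonneg (sub_nonneg.2 hqj1) (sub_nonneg.2 hCFL)]

theorem fwdDiff_nonlocalAvg_conservative (hγ : Summable γ) {C C' : ℝ} (hq : ∀ j, |q j| ≤ C)
    {F : ℤ → ℝ} (hF : ∀ j, |F j| ≤ C') (t : ℝ) (j : ℤ) :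
    Δ_[1] (nonlocalAvg γ fun c => q c + t * (F c - F (c + 1))) j =
      Δ_[1] (nonlocalAvg γ q) j + t * ((γ 0 + negDiff γ 0) * F (j + 1) - γ 0 * F j -
        nonlocalAvg (negDiff (negDiff γ)) F (j + 1 + 1)) := by
  have e1 := nonlocalAvg_add_mul_sub_shift hγ hq hF t
  have e2 := nonlocalAvg_negDiff hγ hF j
  have e3 := nonlocalAvg_negDiff hγ hF (j + 1)
  have e4 := nonlocalAvg_negDiff (summable_negDiff hγ) hF (j + 1)
  rw [fwdDiff, fwdDiff, e1, e1]
  linear_combination t * (e3 - e2 + e4)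

theorem nonlocalAvg_flux_eq_tailAvg (hγ : Summable γ) (hh : ∀ k, 0 ≤ negDiff (negDiff γ) k)
    (hq : ∀ j, q j ∈ Icc (0 : ℝ) 1) {v : ℤ → ℝ} {C : ℝ} (hv : ∀ c, |v c| ≤ C) (j : ℤ) :
    nonlocalAvg (negDiff (negDiff γ)) (fun c => q (c - 1) * v c) (j + 1 + 1) =
      tailAvg γ q j 0 * v (j + 1) + ∑' s : ℕ, tailAvg γ q j s * Δ_[1] v (j + s + 1) := by
  have hK : Summable (tailAvg γ q j) :=
    Summable.of_nonneg_of_le (fun s => (tailAvg_mem_Icc hγ hh hq j s).1)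
      (fun s => (tailAvg_mem_Icc hγ hh hq j s).2) (summable_negDiff hγ)
  have hflux : nonlocalAvg (negDiff (negDiff γ)) (fun c => q (c - 1) * v c) (j + 1 + 1) =
      nonlocalAvg (negDiff (tailAvg γ q j)) v (j + 1 + 1) :=
    tsum_congr fun k => by rw [negDiff_tailAvg hγ hq]; ring_nf
  rw [hflux, nonlocalAvg_negDiff hK hv (j + 1), add_sub_assoc, nonlocalAvg_succ_sub hK hv (j + 1)]
  congr 1
  exact tsum_congr fun s => by rw [fwdDiff]; ring_nf

theorem fwdDiff_nonlocalAvg_godunovStep (hγ : Summable γ)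
    (hh : ∀ k, 0 ≤ negDiff (negDiff γ) k) (hq : ∀ j, q j ∈ Icc (0 : ℝ) 1)
    (hV : ∀ c, |V (nonlocalAvg γ q c)| ≤ M) (j : ℤ) :
    Δ_[1] (nonlocalAvg γ (godunovStep lam V γ q)) j =
      (1 - lam * V (nonlocalAvg γ q j) + lam * chordSlope V (nonlocalAvg γ q) j *
          (nonlocalAvg (negDiff γ) q j - Δ_[1] (nonlocalAvg γ q) j)) * Δ_[1] (nonlocalAvg γ q) j +
        lam * V (nonlocalAvg γ q j) * Δ_[1] (nonlocalAvg γ q) (j - 1) +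
        ∑' s : ℕ, -(lam * chordSlope V (nonlocalAvg γ q) (j + s + 1) * tailAvg γ q j s) *
          Δ_[1] (nonlocalAvg γ q) (j + s + 1) := by
  set w := nonlocalAvg γ q with hw
  have hq' : ∀ c, |q c| ≤ 1 := fun c => abs_le_one_of_mem_Icc (hq c)
  obtain ⟨F, hF_def⟩ : ∃ F : ℤ → ℝ, F = fun c => q (c - 1) * V (w c) := ⟨_, rfl⟩
  have hF : ∀ c, |F c| ≤ M := fun c => by
    rw [hF_def, abs_mul]
    exact (mul_le_of_le_one_left (abs_nonneg _) (hq' _)).trans (hV c)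
  have hstep : godunovStep lam V γ q = fun c => q c + lam * (F c - F (c + 1)) := by
    funext c
    simp only [godunovStep, hF_def, add_sub_cancel_right]
    rfl
  have hflux := nonlocalAvg_flux_eq_tailAvg hγ hh hq hV j
  rw [← hF_def] at hflux
  have hprev : nonlocalAvg (negDiff γ) q j = γ 0 * q (j - 1) + Δ_[1] w (j - 1) := by
    have h := nonlocalAvg_negDiff hγ hq' (j - 1)
    rw [sub_add_cancel] at h
    rw [h, fwdDiff, sub_add_cancel]
    ring
  have hcur : nonlocalAvg (negDiff γ) q (j + 1) = γ 0 * q j + Δ_[1] w j := by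
    rw [nonlocalAvg_negDiff hγ hq' j, fwdDiff]
    ring
  have htail0 : tailAvg γ q j 0 =
      negDiff γ 0 * q j + nonlocalAvg (negDiff γ) q (j + 1) - nonlocalAvg (negDiff γ) q j := by
    simpa [tailAvg] using nonlocalAvg_negDiff (summable_negDiff hγ) hq' j
  have hslope := fwdDiff_comp_eq_chordSlope_mul (V := V) w j
  have hsum : ∑' s : ℕ, -(lam * chordSlope V w (j + s + 1) * tailAvg γ q j s) *
      Δ_[1] w (j + s + 1) =
        -lam * ∑' s : ℕ, tailAvg γ q j s * Δ_[1] (fun c => V (w c)) (j + s + 1) := by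
    rw [← tsum_mul_left]
    exact tsum_congr fun s => by rw [fwdDiff_comp_eq_chordSlope_mul]; ring
  rw [hstep, fwdDiff_nonlocalAvg_conservative hγ hq' hF lam j, hflux, hsum, hF_def]
  simp only [fwdDiff] at hslope hprev hcur ⊢
  simp only [add_sub_cancel_right, ← hw]
  linear_combination lam * V (w j) * hprev - lam * V (w (j + 1)) * htail0
    - lam * V (w (j + 1)) * hcur + lam * (nonlocalAvg (negDiff γ) q j - (w (j + 1) - w j)) * hslope

theorem abs_nonlocalAvg_negDiff_sub_fwdDiff_le (hγnn : ∀ k, 0 ≤ γ k)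
    (hγmono : ∀ k, γ (k + 1) ≤ γ k) (hγsum : HasSum γ 1) (hq : ∀ j, q j ∈ Icc (0 : ℝ) 1)
    (c : ℤ) : |nonlocalAvg (negDiff γ) q c - Δ_[1] (nonlocalAvg γ q) c| ≤ 2 := by
  have hg := nonlocalAvg_negDiff_mem_Icc hγsum.summable hγmono hq c
  have hγ0 : γ 0 ≤ 1 := le_hasSum hγsum 0 fun k _ => hγnn k
  obtain ⟨hw0, hw1⟩ := nonlocalAvg_mem_Icc hγnn hγsum hq c
  obtain ⟨hw0', hw1'⟩ := nonlocalAvg_mem_Icc hγnn hγsum hq (c + 1)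
  rw [fwdDiff, abs_le]
  constructor <;> linarith [hg.1, hg.2]

theorem isColumnStochastic_godunovStep (hlam : 0 ≤ lam) (hL : 0 ≤ L)
    (hVlip : ∀ x y, |V x - V y| ≤ L * |x - y|) (hVmono : AntitoneOn V (Icc 0 1))
    (hVbd : MapsTo V (Icc 0 1) (Icc 0 M)) (hγnn : ∀ k, 0 ≤ γ k)
    (hγmono : ∀ k, γ (k + 1) ≤ γ k) (hγsum : HasSum γ 1)
    (hconv : ∀ k, 2 * γ (k + 1) ≤ γ k + γ (k + 2)) (hCFL : lam * (M + 2 * L) ≤ 1)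
    (hq : ∀ j, q j ∈ Icc (0 : ℝ) 1) :
    IsColumnStochastic (Δ_[1] (nonlocalAvg γ (godunovStep lam V γ q)))
      (Δ_[1] (nonlocalAvg γ q)) := by
  set w := nonlocalAvg γ q
  have hw01 : ∀ c, w c ∈ Icc (0 : ℝ) 1 := nonlocalAvg_mem_Icc hγnn hγsum hq
  have hv : ∀ c, V (w c) ∈ Icc 0 M := fun c => hVbd (hw01 c)
  have hh := negDiff_negDiff_nonneg hconv
  have hvabs : ∀ c, |V (w c)| ≤ M := fun c => abs_le.2 ⟨by linarith [(hv c).1, (hv c).2], (hv c).2⟩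
  refine ⟨fun j => 1 - lam * V (w j) + lam * chordSlope V w j *
      (nonlocalAvg (negDiff γ) q j - Δ_[1] w j), fun j => lam * V (w j),
    fun j s => -(lam * chordSlope V w (j + s + 1) * tailAvg γ q j s), fun j => ?_,
    fun j => mul_nonneg hlam (hv j).1, fun j s => ?_,
    fwdDiff_nonlocalAvg_godunovStep hγsum.summable hh hq hvabs, fun c => ?_⟩
  · have hσP : -(2 * L) ≤ chordSlope V w j * (nonlocalAvg (negDiff γ) q j - Δ_[1] w j) := by
      refine neg_le_of_abs_le ((abs_mul _ _).trans_le ?_)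
      nlinarith [abs_nonneg (nonlocalAvg (negDiff γ) q j - Δ_[1] w j),
        abs_nonlocalAvg_negDiff_sub_fwdDiff_le hγnn hγmono hγsum hq j,
        abs_chordSlope_le hL hVlip w j]
    nlinarith [(hv j).2]
  · beta_reduce
    rw [← neg_mul, ← mul_neg]
    exact mul_nonneg (mul_nonneg hlam (neg_nonneg.2 (chordSlope_mem_Icc hL hVlip hVmono hw01 _).2))
      (tailAvg_mem_Icc hγsum.summable hh hq j s).1
  · have hslope := fwdDiff_comp_eq_chordSlope_mul (V := V) w c
    have hidx : ∀ s : ℕ, c - s - 1 + s + 1 = c := fun s => by ring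
    have hcol : 1 - (1 - lam * V (w c) + lam * chordSlope V w c *
        (nonlocalAvg (negDiff γ) q c - Δ_[1] w c)) - lam * V (w (c + 1)) =
          -(lam * chordSlope V w c) * nonlocalAvg (negDiff γ) q c := by
      simp only [fwdDiff] at hslope ⊢
      linear_combination (-lam) * hslope
    simp only [hidx, hcol, neg_mul]
    simpa only [neg_mul] using
      (hasSum_tailAvg hγsum.summable hh hq c).mul_left (-(lam * chordSlope V w c))

theorem isColumnStochastic_nonlocalAvg (hγnn : ∀ k, 0 ≤ γ k) (hγsum : HasSum γ 1) {C : ℝ}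
    (hq : ∀ j, |q j| ≤ C) : IsColumnStochastic (Δ_[1] (nonlocalAvg γ q)) (Δ_[1] q) := by
  have hγ := hγsum.summable
  have hshift : Summable fun k => γ (k + 1) := (summable_nat_add_iff 1).2 hγ
  refine ⟨fun _ => γ 0, fun _ => 0, fun _ s => γ (s + 1), fun _ => hγnn 0, fun _ => le_rfl,
    fun _ _ => hγnn _, fun j => ?_, fun c => ?_⟩
  · rw [fwdDiff, nonlocalAvg_eq_add_shift hγ hq (j + 1), nonlocalAvg_eq_add_shift hγ hq j]
    have h : nonlocalAvg (fun k => γ (k + 1)) q (j + 1 + 1) -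
        nonlocalAvg (fun k => γ (k + 1)) q (j + 1) =
          ∑' s : ℕ, γ (s + 1) * Δ_[1] q (j + s + 1) := by
      rw [nonlocalAvg_succ_sub hshift hq (j + 1)]
      exact tsum_congr fun s => by rw [fwdDiff]; ring_nf
    rw [fwdDiff, zero_mul, add_zero]
    linear_combination h
  · simpa using (hasSum_nat_add_iff' 1).2 hγsum

end Scheme

end

theorem godunov_W_TVD_space_general
    (lam M L : ℝ) (hlam : 0 < lam) (hL : 0 ≤ L)
    (V : ℝ → ℝ)
    (hVlip : ∀ x y : ℝ, |V x - V y| ≤ L * |x - y|)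
    (hVmono : ∀ x ∈ Set.Icc (0:ℝ) 1, ∀ y ∈ Set.Icc (0:ℝ) 1, x ≤ y → V y ≤ V x)
    (hVbd : ∀ ξ ∈ Set.Icc (0:ℝ) 1, V ξ ∈ Set.Icc (0:ℝ) M)
    (γ : ℕ → ℝ)
    (hγnn : ∀ k, 0 ≤ γ k) (hγmono : ∀ k, γ (k+1) ≤ γ k)
    (hγsum : HasSum γ 1)
    (ρ0 : ℤ → ℝ) (hρ0 : ∀ j, ρ0 j ∈ Set.Icc (0:ℝ) 1)
    (ρ W : ℕ → ℤ → ℝ)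
    (hinit : ∀ j : ℤ, ρ 0 j = ρ0 j)
    (hW : ∀ (n : ℕ) (j : ℤ), W n j = ∑' k : ℕ, γ k * ρ n (j + (k:ℤ)))
    (hupd : ∀ (n : ℕ) (j : ℤ),
      ρ (n+1) j = ρ n j + lam * (ρ n (j-1) * V (W n j) - ρ n j * V (W n (j+1))))
    (hconv : ∀ k : ℕ, 2 * γ (k+1) ≤ γ k + γ (k+2))
    (hCFL : lam * (M + 2*L) ≤ 1) :
    ∀ n : ℕ,
      (∑' j : ℤ, ENNReal.ofReal |W (n+1) (j+1) - W (n+1) j| ≤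
        ∑' j : ℤ, ENNReal.ofReal |W n (j+1) - W n j|) ∧
      (∑' j : ℤ, ENNReal.ofReal |W n (j+1) - W n j| ≤
        ∑' j : ℤ, ENNReal.ofReal |ρ0 (j+1) - ρ0 j|) := by
  have hVbd' : MapsTo V (Icc 0 1) (Icc 0 M) := fun x hx => hVbd x hx
  have hWeq : ∀ n, W n = nonlocalAvg γ (ρ n) := fun n => funext (hW n)
  have hstep : ∀ n, ρ (n + 1) = godunovStep lam V γ (ρ n) := fun n => funext fun j => by
    rw [hupd, godunovStep, hWeq]
  have hρ : ∀ n j, ρ n j ∈ Icc (0 : ℝ) 1 := by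
    intro n
    induction n with
    | zero => simpa only [hinit] using hρ0
    | succ n ih =>
      rw [hstep]
      exact godunovStep_mem_Icc hlam.le hL hVlip hVmono hVbd' hγnn hγmono hγsum
        (by nlinarith [mul_nonneg hlam.le hL]) ih
  have hTVD : ∀ n, ∑' j, ‖Δ_[1] (W (n + 1)) j‖ₑ ≤ ∑' j, ‖Δ_[1] (W n) j‖ₑ := fun n => by
    rw [hWeq, hWeq, hstep]
    exact (isColumnStochastic_godunovStep hlam.le hL hVlip hVmono hVbd' hγnn hγmono hγsum hconv
      hCFL (hρ n)).tsum_enorm_le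
  have hTV0 : ∑' j, ‖Δ_[1] (W 0) j‖ₑ ≤ ∑' j, ‖Δ_[1] ρ0 j‖ₑ := by
    rw [hWeq, funext hinit]
    exact (isColumnStochastic_nonlocalAvg hγnn hγsum
      fun j => abs_le_one_of_mem_Icc (hρ0 j)).tsum_enorm_le
  simp only [fwdDiff, Real.enorm_eq_ofReal_abs] at hTVD hTV0
  intro n
  refine ⟨hTVD n, ?_⟩
  induction n with
  | zero => exact hTV0
  | succ n ih => exact (hTVD n).trans ih

/-- Spatial total variation diminishing property (convex weights), under the
strong CFL condition `λ (M + 2L) ≤ 1`. -/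
theorem godunov_W_TVD_space
    (lam M L : ℝ) (hlam : 0 < lam) (hM : 0 ≤ M) (hL : 0 ≤ L)
    (V : ℝ → ℝ)
    (hVlip : ∀ x y : ℝ, |V x - V y| ≤ L * |x - y|)
    (hVmono : ∀ x ∈ Set.Icc (0:ℝ) 1, ∀ y ∈ Set.Icc (0:ℝ) 1, x ≤ y → V y ≤ V x)
    (hVbd : ∀ ξ ∈ Set.Icc (0:ℝ) 1, V ξ ∈ Set.Icc (0:ℝ) M)
    (γ : ℕ → ℝ)
    (hγnn : ∀ k, 0 ≤ γ k) (hγmono : ∀ k, γ (k+1) ≤ γ k)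
    (hγsum : HasSum γ 1)
    (ρ0 : ℤ → ℝ) (hρ0 : ∀ j, ρ0 j ∈ Set.Icc (0:ℝ) 1)
    (ρ W : ℕ → ℤ → ℝ)
    (hinit : ∀ j : ℤ, ρ 0 j = ρ0 j)
    (hW : ∀ (n : ℕ) (j : ℤ), W n j = ∑' k : ℕ, γ k * ρ n (j + (k:ℤ)))
    (hupd : ∀ (n : ℕ) (j : ℤ),
      ρ (n+1) j = ρ n j + lam * (ρ n (j-1) * V (W n j) - ρ n j * V (W n (j+1))))
    (hconv : ∀ k : ℕ, 2 * γ (k+1) ≤ γ k + γ (k+2))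
    (hCFL : lam * (M + 2*L) ≤ 1) :
    ∀ n : ℕ,
      (∑' j : ℤ, ENNReal.ofReal |W (n+1) (j+1) - W (n+1) j| ≤
        ∑' j : ℤ, ENNReal.ofReal |W n (j+1) - W n j|) ∧
      (∑' j : ℤ, ENNReal.ofReal |W n (j+1) - W n j| ≤
        ∑' j : ℤ, ENNReal.ofReal |ρ0 (j+1) - ρ0 j|) :=
  godunov_W_TVD_space_general lam M L hlam hL V hVlip hVmono hVbd γ hγnn hγmono hγsum ρ0 hρ0 ρ W
    hinit hW hupd hconv hCFL
end

section
/- Discrete Kružkov-type entropy inequality for the discrete nonlocal impact: assume the CFL condition λ(M + L) ≤ 1. For c ∈ [0,1], n ∈ ℕ and j ∈ ℤ define the numerical entropy flux Ψⁿ_{j−1/2} = |Wⁿ_{j−1} − c| V(c) − ∑_{k=0}^∞ γ_k ρⁿ_{j+k−1} |V(Wⁿ_{j+k}) − V(c)|, and let Ψⁿ_{j+1/2} be the same expression with j replaced by j+1. Then for every c ∈ [0,1], n ∈ ℕ and j ∈ ℤ: |W^{n+1}_j − c| − |Wⁿ_j − c| + λ (Ψⁿ_{j+1/2} − Ψⁿ_{j−1/2})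 ≤ 0. -/
set_option maxHeartbeats 2000000 in
/-- Discrete Kružkov-type entropy inequality for the discrete nonlocal impact:
under the CFL condition `λ (M + L) ≤ 1`, with the numerical entropy flux
`Ψⁿ_{j−1/2} = |Wⁿ_{j−1} − c| V(c) − ∑ₖ γₖ ρⁿ_{j+k−1} |V(Wⁿ_{j+k}) − V(c)|`,
one has `|W^{n+1}_j − c| − |Wⁿ_j − c| + λ (Ψⁿ_{j+1/2} − Ψⁿ_{j−1/2}) ≤ 0`. -/
theorem godunov_W_discrete_entropy_inequality
    (lam M L : ℝ) (hlam : 0 < lam) (hM : 0 ≤ M) (hL : 0 ≤ L)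
    (V : ℝ → ℝ)
    (hVlip : ∀ x y : ℝ, |V x - V y| ≤ L * |x - y|)
    (hVmono : ∀ x ∈ Set.Icc (0:ℝ) 1, ∀ y ∈ Set.Icc (0:ℝ) 1, x ≤ y → V y ≤ V x)
    (hVbd : ∀ ξ ∈ Set.Icc (0:ℝ) 1, V ξ ∈ Set.Icc (0:ℝ) M)
    (γ : ℕ → ℝ)
    (hγnn : ∀ k, 0 ≤ γ k) (hγmono : ∀ k, γ (k+1) ≤ γ k)
    (hγsum : HasSum γ 1)
    (ρ0 : ℤ → ℝ) (hρ0 : ∀ j, ρ0 j ∈ Set.Icc (0:ℝ) 1)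
    (ρ W : ℕ → ℤ → ℝ)
    (hinit : ∀ j : ℤ, ρ 0 j = ρ0 j)
    (hW : ∀ (n : ℕ) (j : ℤ), W n j = ∑' k : ℕ, γ k * ρ n (j + (k:ℤ)))
    (hupd : ∀ (n : ℕ) (j : ℤ),
      ρ (n+1) j = ρ n j + lam * (ρ n (j-1) * V (W n j) - ρ n j * V (W n (j+1))))
    (hCFL : lam * (M + L) ≤ 1)
    (Ψ : ℝ → ℕ → ℤ → ℝ)
    (hΨ : ∀ (c : ℝ) (n : ℕ) (j : ℤ),
      Ψ c n j = |W n (j-1) - c| * V c -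
        ∑' k : ℕ, γ k * ρ n (j + (k:ℤ) - 1) * |V (W n (j + (k:ℤ))) - V c|) :
    ∀ c ∈ Set.Icc (0:ℝ) 1, ∀ (n : ℕ) (j : ℤ),
      |W (n+1) j - c| - |W n j - c| + lam * (Ψ c n (j+1) - Ψ c n j) ≤ 0 := by
  have hγs : Summable γ := hγsum.summable
  have htγ : ∑' k, γ k = 1 := hγsum.tsum_eq
  have hγle1 : ∀ k, γ k ≤ 1 := by
    intro k
    have h := Summable.le_tsum hγs k (fun i _ => hγnn i)
    rw [htγ] at h; exact h
  have hsum : ∀ (g : ℕ → ℝ) (C : ℝ), (∀ k, |g k| ≤ C * γ k) → Summable g := by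
    intro g C h
    exact Summable.of_abs (Summable.of_nonneg_of_le (fun k => abs_nonneg _) h (hγs.mul_left C))
  have hbound : ∀ (a C x : ℝ) (k : ℕ), 0 ≤ a → a ≤ γ k → |x| ≤ C → |a * x| ≤ C * γ k := by
    intro a C x k ha hak hx
    rw [abs_mul, abs_of_nonneg ha]
    nlinarith [abs_nonneg x, hγnn k]
  have hbx : ∀ (r y C : ℝ), |r| ≤ 1 → |y| ≤ C → |r * y| ≤ C := by
    intro r y C h1 h2
    rw [abs_mul]
    nlinarith [abs_nonneg r, abs_nonneg y]
  have hΔnn : ∀ k, 0 ≤ γ k - γ (k+1) := fun k => sub_nonneg.2 (hγmono k)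
  have hΔle : ∀ k, γ k - γ (k+1) ≤ γ k := fun k => by linarith [hγnn (k+1)]
  have hγs1 : Summable (fun k => γ (k+1)) := (summable_nat_add_iff 1).mpr hγs
  have hΔsummable : Summable (fun k => γ k - γ (k+1)) := hγs.sub hγs1
  have hΔtsum : ∑' k, (γ k - γ (k+1)) = γ 0 := by
    have h0 := Summable.tsum_eq_zero_add hγs
    rw [Summable.tsum_sub hγs hγs1, htγ]
    rw [htγ] at h0
    linarith
  -- W bounds from ρ bounds at a level
  have hWb : ∀ (n : ℕ), (∀ i : ℤ, 0 ≤ ρ n i ∧ ρ n i ≤ 1) → ∀ j : ℤ, 0 ≤ W n j ∧ W n j ≤ 1 := by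
    intro n hρn j
    have hs : Summable (fun k : ℕ => γ k * ρ n (j + (k:ℤ))) := by
      apply hsum _ 1
      intro k
      exact hbound (γ k) 1 (ρ n (j + (k:ℤ))) k (hγnn k) le_rfl
        (abs_le.mpr ⟨by linarith [(hρn (j+(k:ℤ))).1], (hρn (j+(k:ℤ))).2⟩)
    constructor
    · rw [hW]
      exact tsum_nonneg fun k => mul_nonneg (hγnn k) (hρn _).1
    · rw [hW]
      have h := Summable.tsum_le_tsum (f := fun k : ℕ => γ k * ρ n (j + (k:ℤ))) (g := γ)
        (fun k => by
          show γ k * ρ n (j + (k:ℤ)) ≤ γ k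
          nlinarith [(hρn (j+(k:ℤ))).2, hγnn k, (hρn (j+(k:ℤ))).1]) hs hγs
      linarith [htγ ▸ h]
  -- maximum principle
  have hρb : ∀ n, ∀ j : ℤ, 0 ≤ ρ n j ∧ ρ n j ≤ 1 := by
    intro n
    induction n with
    | zero => intro j; rw [hinit]; exact ⟨(hρ0 j).1, (hρ0 j).2⟩
    | succ n ih =>
      have hWn := hWb n ih
      have hρabs : ∀ i : ℤ, |ρ n i| ≤ 1 := fun i =>
        abs_le.mpr ⟨by linarith [(ih i).1], (ih i).2⟩
      have hVn : ∀ i : ℤ, 0 ≤ V (W n i) ∧ V (W n i) ≤ M := fun i => by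
        have h := hVbd (W n i) ⟨(hWn i).1, (hWn i).2⟩
        exact ⟨h.1, h.2⟩
      intro j
      -- summabilities
      have sB : Summable (fun k : ℕ => γ k * ρ n (j + 1 + (k:ℤ))) :=
        hsum _ 1 (fun k => hbound _ _ _ k (hγnn k) le_rfl (hρabs _))
      have sBT : Summable (fun k : ℕ => γ (k+1) * ρ n (j + 1 + (k:ℤ))) :=
        hsum _ 1 (fun k => hbound _ _ _ k (hγnn (k+1)) (hγmono k) (hρabs _))
      have sD : Summable (fun k : ℕ => (γ k - γ (k+1)) * ρ n (j + 1 + (k:ℤ))) :=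
        hsum _ 1 (fun k => hbound _ _ _ k (hΔnn k) (hΔle k) (hρabs _))
      -- shift identity for W n j
      have sB0 : Summable (fun k : ℕ => γ k * ρ n (j + (k:ℤ))) :=
        hsum _ 1 (fun k => hbound _ _ _ k (hγnn k) le_rfl (hρabs _))
      have eW : W n j = γ 0 * ρ n j + ∑' k : ℕ, γ (k+1) * ρ n (j + 1 + (k:ℤ)) := by
        rw [hW n j, Summable.tsum_eq_zero_add sB0]
        congr 1
        · norm_num
        · refine tsum_congr fun k => ?_
          have a1 : j + ((k:ℤ) + 1) = j + 1 + (k:ℤ) := by ring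
          push_cast
          rw [a1]
      have key : W n (j+1) - W n j ≤ γ 0 * (1 - ρ n j) := by
        have e2 : W n (j+1) = ∑' k : ℕ, γ k * ρ n (j + 1 + (k:ℤ)) := hW n (j+1)
        have e3 : ∑' k : ℕ, ((γ k - γ (k+1)) * ρ n (j + 1 + (k:ℤ)))
            = (∑' k : ℕ, γ k * ρ n (j + 1 + (k:ℤ))) - ∑' k : ℕ, γ (k+1) * ρ n (j + 1 + (k:ℤ)) := by
          rw [← Summable.tsum_sub sB sBT]
          exact tsum_congr fun k => by ring
        have e4 : ∑' k : ℕ, ((γ k - γ (k+1)) * ρ n (j + 1 + (k:ℤ))) ≤ ∑' k, (γ k - γ (k+1)) := by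
          refine Summable.tsum_le_tsum (fun k => ?_) sD hΔsummable
          nlinarith [hΔnn k, (ih (j+1+(k:ℤ))).2, (ih (j+1+(k:ℤ))).1]
        rw [hΔtsum] at e4
        have : W n (j+1) - W n j = (∑' k : ℕ, ((γ k - γ (k+1)) * ρ n (j + 1 + (k:ℤ)))) - γ 0 * ρ n j := by
          rw [e2, eW, e3]; ring
        nlinarith [this, e4]
      have hVdiff : V (W n j) - V (W n (j+1)) ≤ L * (γ 0 * (1 - ρ n j)) := by
        rcases le_total (W n j) (W n (j+1)) with h | h
        · have h1 := hVlip (W n j) (W n (j+1))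
          have h2 : |W n j - W n (j+1)| = W n (j+1) - W n j := by
            rw [abs_sub_comm, abs_of_nonneg (by linarith)]
          have h3 := le_abs_self (V (W n j) - V (W n (j+1)))
          rw [h2] at h1
          nlinarith [key]
        · have h1 := hVmono (W n (j+1)) ⟨(hWn (j+1)).1, (hWn (j+1)).2⟩ (W n j)
            ⟨(hWn j).1, (hWn j).2⟩ h
          nlinarith [mul_nonneg hL (mul_nonneg (hγnn 0) (sub_nonneg.2 (ih j).2))]
      constructor
      · rw [hupd]
        have h1 : lam * V (W n (j+1)) ≤ 1 := by
          nlinarith [(hVn (j+1)).2, hlam.le, mul_nonneg hlam.le hL]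
        nlinarith [mul_nonneg (ih j).1 (sub_nonneg.2 h1),
          mul_nonneg (mul_nonneg hlam.le (ih (j-1)).1) (hVn j).1]
      · rw [hupd]
        nlinarith [mul_le_mul_of_nonneg_left hVdiff hlam.le,
          mul_nonneg (mul_nonneg hlam.le (hVn j).1) (sub_nonneg.2 (ih (j-1)).2),
          mul_nonneg (mul_nonneg hlam.le (sub_nonneg.2 (ih j).2)) (sub_nonneg.2 (hVn (j+1)).2),
          mul_nonneg (sub_nonneg.2 (ih j).2) (sub_nonneg.2 hCFL),
          mul_nonneg (mul_nonneg (mul_nonneg hlam.le hL) (sub_nonneg.2 (ih j).2)) (sub_nonneg.2 (hγle1 0))]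

  -- main entropy inequality
  intro c hc n j
  have hρn := hρb n
  have hWn := hWb n hρn
  have hρabs : ∀ i : ℤ, |ρ n i| ≤ 1 := fun i =>
    abs_le.mpr ⟨by linarith [(hρn i).1], (hρn i).2⟩
  have hVn : ∀ i : ℤ, 0 ≤ V (W n i) ∧ V (W n i) ≤ M := fun i => by
    have h := hVbd (W n i) ⟨(hWn i).1, (hWn i).2⟩
    exact ⟨h.1, h.2⟩
  have hvc : 0 ≤ V c ∧ V c ≤ M := by
    have h := hVbd c hc; exact ⟨h.1, h.2⟩
  have hVabs : ∀ i : ℤ, |V (W n i)| ≤ M := fun i =>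
    abs_le.mpr ⟨by linarith [(hVn i).1], (hVn i).2⟩
  have hdabs : ∀ i : ℤ, |V (W n i) - V c| ≤ M := fun i =>
    abs_le.mpr ⟨by linarith [(hVn i).1, hvc.2], by linarith [(hVn i).2, hvc.1]⟩
  have habsabs : ∀ i : ℤ, |abs (V (W n i) - V c)| ≤ M := fun i => by
    rw [abs_abs]; exact hdabs i
  -- summability of all the series
  have sB : Summable (fun k : ℕ => γ k * ρ n (j + (k:ℤ))) :=
    hsum _ 1 (fun k => hbound _ _ _ k (hγnn k) le_rfl (hρabs _))
  have sBT : Summable (fun k : ℕ => γ (k+1) * ρ n (j + (k:ℤ))) :=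
    hsum _ 1 (fun k => hbound _ _ _ k (hγnn (k+1)) (hγmono k) (hρabs _))
  have sD : Summable (fun k : ℕ => (γ k - γ (k+1)) * ρ n (j + (k:ℤ))) :=
    hsum _ 1 (fun k => hbound _ _ _ k (hΔnn k) (hΔle k) (hρabs _))
  have sWm : Summable (fun k : ℕ => γ k * ρ n (j - 1 + (k:ℤ))) :=
    hsum _ 1 (fun k => hbound _ _ _ k (hγnn k) le_rfl (hρabs _))
  have sS1 : Summable (fun k : ℕ => γ k * (ρ n (j + (k:ℤ) - 1) * V (W n (j + (k:ℤ))))) :=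
    hsum _ M (fun k => hbound _ _ _ k (hγnn k) le_rfl (hbx _ _ _ (hρabs _) (hVabs _)))
  have sS1T : Summable (fun k : ℕ => γ (k+1) * (ρ n (j + (k:ℤ)) * V (W n (j + (k:ℤ) + 1)))) :=
    hsum _ M (fun k => hbound _ _ _ k (hγnn (k+1)) (hγmono k) (hbx _ _ _ (hρabs _) (hVabs _)))
  have sS2 : Summable (fun k : ℕ => γ k * (ρ n (j + (k:ℤ)) * V (W n (j + (k:ℤ) + 1)))) :=
    hsum _ M (fun k => hbound _ _ _ k (hγnn k) le_rfl (hbx _ _ _ (hρabs _) (hVabs _)))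
  have sDV : Summable (fun k : ℕ => (γ k - γ (k+1)) * (ρ n (j + (k:ℤ)) * V (W n (j + (k:ℤ) + 1)))) :=
    hsum _ M (fun k => hbound _ _ _ k (hΔnn k) (hΔle k) (hbx _ _ _ (hρabs _) (hVabs _)))
  have sDv : Summable (fun k : ℕ => (γ k - γ (k+1)) * (ρ n (j + (k:ℤ)) * (V (W n (j + (k:ℤ) + 1)) - V c))) :=
    hsum _ M (fun k => hbound _ _ _ k (hΔnn k) (hΔle k) (hbx _ _ _ (hρabs _) (hdabs _)))
  have sDa : Summable (fun k : ℕ => (γ k - γ (k+1)) * (ρ n (j + (k:ℤ)) * |V (W n (j + (k:ℤ) + 1)) - V c|)) :=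
    hsum _ M (fun k => hbound _ _ _ k (hΔnn k) (hΔle k) (hbx _ _ _ (hρabs _) (habsabs _)))
  have sT1 : Summable (fun k : ℕ => γ k * (ρ n (j + (k:ℤ) - 1) * |V (W n (j + (k:ℤ))) - V c|)) :=
    hsum _ M (fun k => hbound _ _ _ k (hγnn k) le_rfl (hbx _ _ _ (hρabs _) (habsabs _)))
  have sT1T : Summable (fun k : ℕ => γ (k+1) * (ρ n (j + (k:ℤ)) * |V (W n (j + (k:ℤ) + 1)) - V c|)) :=
    hsum _ M (fun k => hbound _ _ _ k (hγnn (k+1)) (hγmono k) (hbx _ _ _ (hρabs _) (habsabs _)))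
  have sT2 : Summable (fun k : ℕ => γ k * (ρ n (j + (k:ℤ)) * |V (W n (j + (k:ℤ) + 1)) - V c|)) :=
    hsum _ M (fun k => hbound _ _ _ k (hγnn k) le_rfl (hbx _ _ _ (hρabs _) (habsabs _)))
  -- (1) update identity for W (n+1) j
  have hWn1j : W (n+1) j = W n j + lam *
      ((∑' k : ℕ, γ k * (ρ n (j + (k:ℤ) - 1) * V (W n (j + (k:ℤ)))))
       - ∑' k : ℕ, γ k * (ρ n (j + (k:ℤ)) * V (W n (j + (k:ℤ) + 1)))) := by
    rw [hW (n+1) j]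
    have e : (fun k : ℕ => γ k * ρ (n+1) (j + (k:ℤ)))
        = fun k : ℕ => γ k * ρ n (j + (k:ℤ)) +
            lam * (γ k * (ρ n (j + (k:ℤ) - 1) * V (W n (j + (k:ℤ))))
                 - γ k * (ρ n (j + (k:ℤ)) * V (W n (j + (k:ℤ) + 1)))) := by
      funext k
      rw [hupd n (j + (k:ℤ))]
      ring
    rw [e, Summable.tsum_add sB ((sS1.sub sS2).mul_left lam), tsum_mul_left, Summable.tsum_sub sS1 sS2, ← hW n j]
  -- (2) shift identity for S1
  have eS1 : (∑' k : ℕ, γ k * (ρ n (j + (k:ℤ) - 1) * V (W n (j + (k:ℤ)))))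
      = γ 0 * (ρ n (j-1) * V (W n j))
        + ∑' k : ℕ, γ (k+1) * (ρ n (j + (k:ℤ)) * V (W n (j + (k:ℤ) + 1))) := by
    rw [Summable.tsum_eq_zero_add sS1]
    congr 1
    · norm_num
    · refine tsum_congr fun k => ?_
      have a1 : j + ((k:ℤ) + 1) - 1 = j + (k:ℤ) := by ring
      have a2 : j + ((k:ℤ) + 1) = j + (k:ℤ) + 1 := by ring
      push_cast
      rw [a1, a2]
  -- (3) ∑ DV = ∑ S2 - ∑ S1T
  have eD : (∑' k : ℕ, (γ k - γ (k+1)) * (ρ n (j + (k:ℤ)) * V (W n (j + (k:ℤ) + 1))))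
      = (∑' k : ℕ, γ k * (ρ n (j + (k:ℤ)) * V (W n (j + (k:ℤ) + 1))))
        - ∑' k : ℕ, γ (k+1) * (ρ n (j + (k:ℤ)) * V (W n (j + (k:ℤ) + 1))) := by
    rw [← Summable.tsum_sub sS2 sS1T]
    exact tsum_congr fun k => by ring
  -- (4) shift identity for W n (j-1)
  have eWm : W n (j-1) = γ 0 * ρ n (j-1) + ∑' k : ℕ, γ (k+1) * ρ n (j + (k:ℤ)) := by
    rw [hW n (j-1), Summable.tsum_eq_zero_add sWm]
    congr 1
    · norm_num
    · refine tsum_congr fun k => ?_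
      have a1 : j - 1 + ((k:ℤ) + 1) = j + (k:ℤ) := by ring
      push_cast
      rw [a1]
  -- (5) ∑ D in terms of W
  have eDsum : (∑' k : ℕ, (γ k - γ (k+1)) * ρ n (j + (k:ℤ)))
      = W n j - W n (j-1) + γ 0 * ρ n (j-1) := by
    have h1 : (∑' k : ℕ, (γ k - γ (k+1)) * ρ n (j + (k:ℤ)))
        = (∑' k : ℕ, γ k * ρ n (j + (k:ℤ))) - ∑' k : ℕ, γ (k+1) * ρ n (j + (k:ℤ)) := by
      rw [← Summable.tsum_sub sB sBT]
      exact tsum_congr fun k => by ring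
    rw [h1, ← hW n j, eWm]
    ring
  -- (6) ∑ Dv = ∑ DV - V c * ∑ D
  have eQ : (∑' k : ℕ, (γ k - γ (k+1)) * (ρ n (j + (k:ℤ)) * (V (W n (j + (k:ℤ) + 1)) - V c)))
      = (∑' k : ℕ, (γ k - γ (k+1)) * (ρ n (j + (k:ℤ)) * V (W n (j + (k:ℤ) + 1))))
        - V c * ∑' k : ℕ, (γ k - γ (k+1)) * ρ n (j + (k:ℤ)) := by
    rw [← tsum_mul_left, ← Summable.tsum_sub sDV (sD.mul_left (V c))]
    exact tsum_congr fun k => by ring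
  -- (7) main representation of W (n+1) j - c
  have hA : W (n+1) j - c = ((W n j - c) - lam * V c * (W n j - W n (j-1))
        + lam * (γ 0 * ρ n (j-1)) * (V (W n j) - V c))
      - lam * ∑' k : ℕ, (γ k - γ (k+1)) * (ρ n (j + (k:ℤ)) * (V (W n (j + (k:ℤ) + 1)) - V c)) := by
    rw [hWn1j, eS1, eQ, eD, eDsum]
    ring
  -- (8) Ψ identities
  have eΨ1 : Ψ c n (j+1) = |W n j - c| * V c
      - ∑' k : ℕ, γ k * (ρ n (j + (k:ℤ)) * |V (W n (j + (k:ℤ) + 1)) - V c|) := by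
    rw [hΨ c n (j+1), show j + 1 - 1 = j from by ring]
    congr 1
    refine tsum_congr fun k => ?_
    have a1 : j + 1 + (k:ℤ) - 1 = j + (k:ℤ) := by ring
    have a2 : j + 1 + (k:ℤ) = j + (k:ℤ) + 1 := by ring
    rw [a1, a2]
    ring
  have eΨ0 : Ψ c n j = |W n (j-1) - c| * V c
      - ∑' k : ℕ, γ k * (ρ n (j + (k:ℤ) - 1) * |V (W n (j + (k:ℤ))) - V c|) := by
    rw [hΨ c n j]
    congr 1
    exact tsum_congr fun k => by ring
  have eT1 : (∑' k : ℕ, γ k * (ρ n (j + (k:ℤ) - 1) * |V (W n (j + (k:ℤ))) - V c|))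
      = γ 0 * (ρ n (j-1) * |V (W n j) - V c|)
        + ∑' k : ℕ, γ (k+1) * (ρ n (j + (k:ℤ)) * |V (W n (j + (k:ℤ) + 1)) - V c|) := by
    rw [Summable.tsum_eq_zero_add sT1]
    congr 1
    · norm_num
    · refine tsum_congr fun k => ?_
      have a1 : j + ((k:ℤ) + 1) - 1 = j + (k:ℤ) := by ring
      have a2 : j + ((k:ℤ) + 1) = j + (k:ℤ) + 1 := by ring
      push_cast
      rw [a1, a2]
  have eQ' : (∑' k : ℕ, (γ k - γ (k+1)) * (ρ n (j + (k:ℤ)) * |V (W n (j + (k:ℤ) + 1)) - V c|))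
      = (∑' k : ℕ, γ k * (ρ n (j + (k:ℤ)) * |V (W n (j + (k:ℤ) + 1)) - V c|))
        - ∑' k : ℕ, γ (k+1) * (ρ n (j + (k:ℤ)) * |V (W n (j + (k:ℤ) + 1)) - V c|) := by
    rw [← Summable.tsum_sub sT2 sT1T]
    exact tsum_congr fun k => by ring
  -- (9) |Q| ≤ Q'
  have hDvabs : ∀ k : ℕ, |(γ k - γ (k+1)) * (ρ n (j + (k:ℤ)) * (V (W n (j + (k:ℤ) + 1)) - V c))|
      = (γ k - γ (k+1)) * (ρ n (j + (k:ℤ)) * |V (W n (j + (k:ℤ) + 1)) - V c|) := fun k => by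
    rw [abs_mul, abs_mul, abs_of_nonneg (hΔnn k), abs_of_nonneg (hρn (j + (k:ℤ))).1]
  have habsQ : |∑' k : ℕ, (γ k - γ (k+1)) * (ρ n (j + (k:ℤ)) * (V (W n (j + (k:ℤ) + 1)) - V c))|
      ≤ ∑' k : ℕ, (γ k - γ (k+1)) * (ρ n (j + (k:ℤ)) * |V (W n (j + (k:ℤ) + 1)) - V c|) := by
    have hs' : Summable (fun k : ℕ => ‖(γ k - γ (k+1)) * (ρ n (j + (k:ℤ)) * (V (W n (j + (k:ℤ) + 1)) - V c))‖) := by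
      simpa only [Real.norm_eq_abs, hDvabs] using sDa
    have h := norm_tsum_le_tsum_norm hs'
    simpa only [Real.norm_eq_abs, hDvabs] using h
  have hQpair := abs_le.mp habsQ
  -- (10) pointwise Kružkov estimate
  have hP : |(W n j - c) - lam * V c * (W n j - W n (j-1))
        + lam * (γ 0 * ρ n (j-1)) * (V (W n j) - V c)|
      ≤ |W n j - c| - lam * V c * (|W n j - c| - |W n (j-1) - c|)
        - lam * (γ 0 * ρ n (j-1)) * |V (W n j) - V c| := by
    have hu0 := (hWn j).1
    have hu1 := (hWn j).2
    have hr0 : 0 ≤ γ 0 * ρ n (j-1) := mul_nonneg (hγnn 0) (hρn (j-1)).1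
    have hr1 : γ 0 * ρ n (j-1) ≤ 1 := by nlinarith [hγle1 0, (hρn (j-1)).2, (hρn (j-1)).1, hγnn 0]
    have hlip := hVlip (W n j) c
    have hw1 := le_abs_self (W n (j-1) - c)
    have hw2 := neg_abs_le (W n (j-1) - c)
    have hvc0 := hvc.1
    have hvcM := hvc.2
    have hcfl2 : lam * V c + lam * L ≤ 1 := by nlinarith [hlam.le]
    rw [abs_le]
    rcases le_total (W n j) c with h | h
    · have hm : V c ≤ V (W n j) := hVmono (W n j) ⟨hu0, hu1⟩ c hc h
      have habsu : |W n j - c| = -(W n j - c) := abs_of_nonpos (by linarith)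
      have habsv : |V (W n j) - V c| = V (W n j) - V c := abs_of_nonneg (by linarith)
      rw [habsu, habsv]
      rw [habsu, habsv] at hlip
      constructor
      · nlinarith [mul_nonneg (mul_nonneg hlam.le hvc0) (show (0:ℝ) ≤ |W n (j-1) - c| + (W n (j-1) - c) by linarith)]
      · nlinarith [mul_nonneg (mul_nonneg hlam.le hvc0) (show (0:ℝ) ≤ |W n (j-1) - c| - (W n (j-1) - c) by linarith),
          mul_nonneg (mul_nonneg hlam.le (sub_nonneg.2 hr1)) (show (0:ℝ) ≤ V (W n j) - V c by linarith),
          mul_nonneg (mul_nonneg hlam.le hr0) (show (0:ℝ) ≤ L * (c - W n j) - (V (W n j) - V c) by nlinarith),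
          mul_nonneg (sub_nonneg.2 hcfl2) (show (0:ℝ) ≤ c - W n j by linarith)]
    · have hm : V (W n j) ≤ V c := hVmono c hc (W n j) ⟨hu0, hu1⟩ h
      have habsu : |W n j - c| = W n j - c := abs_of_nonneg (by linarith)
      have habsv : |V (W n j) - V c| = -(V (W n j) - V c) := abs_of_nonpos (by linarith)
      rw [habsu, habsv]
      rw [habsu, habsv] at hlip
      constructor
      · nlinarith [mul_nonneg (mul_nonneg hlam.le hvc0) (show (0:ℝ) ≤ |W n (j-1) - c| + (W n (j-1) - c) by linarith),
          mul_nonneg (mul_nonneg hlam.le (sub_nonneg.2 hr1)) (show (0:ℝ) ≤ V c - V (W n j) by linarith),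
          mul_nonneg (mul_nonneg hlam.le hr0) (show (0:ℝ) ≤ L * (W n j - c) - (V c - V (W n j)) by nlinarith),
          mul_nonneg (sub_nonneg.2 hcfl2) (show (0:ℝ) ≤ W n j - c by linarith)]
      · nlinarith [mul_nonneg (mul_nonneg hlam.le hvc0) (show (0:ℝ) ≤ |W n (j-1) - c| - (W n (j-1) - c) by linarith)]
  -- finish
  have hQle' := mul_le_mul_of_nonneg_left hQpair.2 hlam.le
  have hQge' := mul_le_mul_of_nonneg_left hQpair.1 hlam.le
  rw [mul_neg] at hQge'
  have habsA : |W (n+1) j - c| ≤ (|W n j - c| - lam * V c * (|W n j - c| - |W n (j-1) - c|)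
      - lam * (γ 0 * ρ n (j-1)) * |V (W n j) - V c|)
      + lam * ∑' k : ℕ, (γ k - γ (k+1)) * (ρ n (j + (k:ℤ)) * |V (W n (j + (k:ℤ) + 1)) - V c|) := by
    rw [hA, abs_le]
    rw [abs_le] at hP
    constructor
    · linarith [hP.1, hQle']
    · linarith [hP.2, hQge']
  have hΨdiff : lam * (Ψ c n (j+1) - Ψ c n j)
      = lam * V c * (|W n j - c| - |W n (j-1) - c|)
        + lam * (γ 0 * ρ n (j-1)) * |V (W n j) - V c|
        - lam * ∑' k : ℕ, (γ k - γ (k+1)) * (ρ n (j + (k:ℤ)) * |V (W n (j + (k:ℤ) + 1)) - V c|) := by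
    rw [eΨ1, eΨ0, eT1, eQ']
    ring
  linarith [habsA, hΨdiff.ge, hΨdiff.le]
end

section
/- Exact quadrature weights satisfy the discrete kernel conditions: let γ : ℝ → ℝ be integrable and nonnegative, vanishing on (0,∞), nondecreasing on (−∞,0], convex on (−∞,0], and with ∫_{(−∞,0]} γ(z) dz = 1. For s > 0 define γ_k = ∫_{[−(k+1)s, −ks]} γ(z) dz for k ∈ ℕ. Then: (i) γ_k ≥ γ_{k+1} ≥ 0 for all k ∈ ℕ; (ii) ∑_{k=0}^∞ γ_k = 1; (iii) γ_{k−1} + γ_{k+1} ≥ 2 γ_k for all k ≥ 1; (iv) ∑_{k=0}^∞ k γ_k ≤ (1/s) ∫_{(−∞,0]} |z| γ(z) dz, the sum and integral taken in [0,∞]. -/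
/-!
The weights are the integrals of `γ` over the cells `(-(k+1)s, -ks]`, which partition `(-∞, 0]`.
Shifting a cell by `s` turns the monotonicity and midpoint convexity of `γ` into the pointwise
inequalities `γ (x - s) ≤ γ x` and `2 γ x ≤ γ (x - s) + γ (x + s)` under a single integral,
countable additivity gives the normalization, and `|z| ≥ k s` on the `k`-th cell gives the
moment bound.
-/

open MeasureTheory Set

theorem MonotoneOn.intervalIntegral_comp_sub_le {f : ℝ → ℝ} {a b h : ℝ}
    (hf : MonotoneOn f (Icc (a - h) b)) (hab : a ≤ b) (hh : 0 ≤ h) :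
    ∫ x in (a - h)..(b - h), f x ≤ ∫ x in a..b, f x := by
  have hint : ∀ {c d}, a - h ≤ c → d ≤ b → c ≤ d → IntervalIntegrable f volume c d :=
    fun hc hd hcd =>
      (hf.mono (by rw [uIcc_of_le hcd]; exact Icc_subset_Icc hc hd)).intervalIntegrable
  have hl : IntervalIntegrable (fun x => f (x - h)) volume a b := by
    simpa using (hint le_rfl (by linarith) (by linarith : a - h ≤ b - h)).comp_sub_right h
  rw [← intervalIntegral.integral_comp_sub_right]
  exact intervalIntegral.integral_mono_on hab hl (hint (by linarith) le_rfl hab) fun x hx =>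
    hf ⟨by linarith [hx.1], by linarith [hx.2]⟩ ⟨by linarith [hx.1], hx.2⟩ (by linarith)

theorem ConvexOn.two_mul_intervalIntegral_le {f : ℝ → ℝ} {a b h : ℝ}
    (hf : ConvexOn ℝ (Icc (a - h) (b + h)) f)
    (hint : IntervalIntegrable f volume (a - h) (b + h)) (hab : a ≤ b) (hh : 0 ≤ h) :
    2 * ∫ x in a..b, f x ≤
      (∫ x in (a - h)..(b - h), f x) + ∫ x in (a + h)..(b + h), f x := by
  have hsub : ∀ {c d}, a - h ≤ c → d ≤ b + h → c ≤ d →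
      IntervalIntegrable f volume c d :=
    fun hc hd hcd => hint.mono_set <| by
      rw [uIcc_of_le hcd, uIcc_of_le (by linarith)]; exact Icc_subset_Icc hc hd
  have hl : IntervalIntegrable (fun x => f (x - h)) volume a b := by
    simpa using (hsub le_rfl (by linarith) (by linarith : a - h ≤ b - h)).comp_sub_right h
  have hr : IntervalIntegrable (fun x => f (x + h)) volume a b := by
    simpa using (hsub (by linarith) le_rfl (by linarith : a + h ≤ b + h)).comp_add_right h
  rw [← intervalIntegral.integral_comp_sub_right, ← intervalIntegral.integral_comp_add_right,
    ← intervalIntegral.integral_add hl hr, ← intervalIntegral.integral_const_mul]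
  refine intervalIntegral.integral_mono_on hab ((hsub (by linarith) (by linarith) hab).const_mul 2)
    (hl.add hr) fun x hx => ?_
  have hmid := hf.2 (x := x - h) (y := x + h) ⟨by linarith [hx.1], by linarith [hx.2]⟩
    ⟨by linarith [hx.1], by linarith [hx.2]⟩ (by norm_num : (0 : ℝ) ≤ 1 / 2)
    (by norm_num : (0 : ℝ) ≤ 1 / 2) (by norm_num)
  have hcenter : (1 / 2 : ℝ) • (x - h) + (1 / 2 : ℝ) • (x + h) = x := by
    simp only [smul_eq_mul]; ring
  rw [hcenter, smul_eq_mul, smul_eq_mul] at hmid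
  linarith

theorem ofReal_neg_mul_setIntegral_Ioc_le {f : ℝ → ℝ} {a b : ℝ} (hb : b ≤ 0)
    (hf : IntegrableOn f (Ioc a b)) (hf₀ : ∀ z ∈ Ioc a b, 0 ≤ f z) :
    ENNReal.ofReal (-b * ∫ z in Ioc a b, f z) ≤
      ∫⁻ z in Ioc a b, ENNReal.ofReal (|z| * f z) := by
  rw [← integral_const_mul, ofReal_integral_eq_lintegral_ofReal (hf.const_mul _)
    ((ae_restrict_iff' measurableSet_Ioc).2 (ae_of_all _ fun z hz =>
      show 0 ≤ -b * f z from mul_nonneg (by linarith) (hf₀ z hz)))]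
  refine setLIntegral_mono' measurableSet_Ioc fun z hz => ENNReal.ofReal_le_ofReal ?_
  have : -b ≤ |z| := by rw [abs_of_nonpos (hz.2.trans hb)]; linarith [hz.2]
  exact mul_le_mul_of_nonneg_right this (hf₀ z hz)

section MeshCells

def meshCell (s : ℝ) (k : ℕ) : Set ℝ := Ioc (-((k : ℝ) + 1) * s) (-(k : ℝ) * s)

variable {s : ℝ}

theorem measurableSet_meshCell (k : ℕ) : MeasurableSet (meshCell s k) := measurableSet_Ioc

theorem pairwise_disjoint_meshCell (hs : 0 ≤ s) :
    Pairwise (Function.onFun Disjoint (meshCell s)) := by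
  have hanti : Antitone fun k : ℕ => -(k : ℝ) * s := fun i j hij => by
    have : (i : ℝ) ≤ j := by exact_mod_cast hij
    nlinarith
  convert hanti.pairwise_disjoint_on_Ioc_succ using 3 with k
  simp [meshCell]

theorem iUnion_meshCell (hs : 0 < s) : ⋃ k, meshCell s k = Iic 0 := by
  refine Subset.antisymm (iUnion_subset fun k z hz => ?_) fun z (hz : z ≤ 0) => ?_
  · have : (0 : ℝ) ≤ k * s := by positivity
    exact (hz.2.trans (by linarith) : z ≤ 0)
  · have hq : 0 ≤ -z / s := div_nonneg (by linarith) hs.le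
    refine mem_iUnion.2 ⟨⌊-z / s⌋₊, ?_, ?_⟩
    · have := Nat.lt_floor_add_one (-z / s)
      rw [div_lt_iff₀ hs] at this
      linarith
    · have := Nat.floor_le hq
      rw [le_div_iff₀ hs] at this
      linarith

theorem meshCell_subset_Iic (hs : 0 < s) (k : ℕ) : meshCell s k ⊆ Iic 0 :=
  iUnion_meshCell hs ▸ subset_iUnion _ k

noncomputable def exactWeight (γ : ℝ → ℝ) (s : ℝ) (k : ℕ) : ℝ :=
  ∫ z in meshCell s k, γ z

variable {γ : ℝ → ℝ}

-- The endpoints are hypotheses so that shifted cells can be matched up to `ring`.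
theorem exactWeight_eq_intervalIntegral (hs : 0 ≤ s) {k : ℕ} {a b : ℝ}
    (ha : a = -((k : ℝ) + 1) * s) (hb : b = -(k : ℝ) * s) :
    exactWeight γ s k = ∫ z in a..b, γ z := by
  rw [exactWeight, meshCell, ← ha, ← hb, intervalIntegral.integral_of_le (by nlinarith)]

theorem exactWeight_nonneg (hγ₀ : ∀ z ≤ 0, 0 ≤ γ z) (hs : 0 < s) (k : ℕ) :
    0 ≤ exactWeight γ s k :=
  setIntegral_nonneg (measurableSet_meshCell k) fun z hz =>
    hγ₀ z (meshCell_subset_Iic hs k hz)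

theorem exactWeight_succ_le (hγ : MonotoneOn γ (Iic 0)) (hs : 0 ≤ s) (k : ℕ) :
    exactWeight γ s (k + 1) ≤ exactWeight γ s k := by
  have hk : (0 : ℝ) ≤ k * s := by positivity
  rw [exactWeight_eq_intervalIntegral hs (a := -((k : ℝ) + 1) * s - s) (b := -(k : ℝ) * s - s)
    (by push_cast; ring) (by push_cast; ring), exactWeight_eq_intervalIntegral hs rfl rfl]
  have hIcc : Icc (-((k : ℝ) + 1) * s - s) (-(k : ℝ) * s) ⊆ Iic 0 :=
    Icc_subset_Iic_self.trans (Iic_subset_Iic.2 (by linarith))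
  exact (hγ.mono hIcc).intervalIntegral_comp_sub_le (by linarith) hs

theorem two_mul_exactWeight_succ_le (hγ : ConvexOn ℝ (Iic 0) γ) (hint : IntegrableOn γ (Iic 0))
    (hs : 0 ≤ s) (k : ℕ) :
    2 * exactWeight γ s (k + 1) ≤ exactWeight γ s k + exactWeight γ s (k + 2) := by
  have hk : (0 : ℝ) ≤ k * s := by positivity
  set a := -((k : ℝ) + 2) * s
  set b := -((k : ℝ) + 1) * s
  have hIcc : Icc (a - s) (b + s) ⊆ Iic 0 :=
    Icc_subset_Iic_self.trans (Iic_subset_Iic.2 (by linarith))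
  rw [exactWeight_eq_intervalIntegral hs (k := k + 1) (a := a) (b := b) (by push_cast; ring)
      (by push_cast; ring),
    exactWeight_eq_intervalIntegral hs (k := k) (a := a + s) (b := b + s) (by ring) (by ring),
    exactWeight_eq_intervalIntegral hs (k := k + 2) (a := a - s) (b := b - s) (by push_cast; ring)
      (by push_cast; ring), add_comm]
  exact (hγ.subset hIcc (convex_Icc _ _)).two_mul_intervalIntegral_le
    ((intervalIntegrable_iff_integrableOn_Icc_of_le (by linarith)).2 (hint.mono_set hIcc))
    (by linarith) hs

theorem hasSum_exactWeight (hint : IntegrableOn γ (Iic 0)) (hs : 0 < s) :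
    HasSum (exactWeight γ s) (∫ z in Iic 0, γ z) := by
  rw [← iUnion_meshCell hs]
  exact hasSum_integral_iUnion measurableSet_meshCell (pairwise_disjoint_meshCell hs.le)
    (iUnion_meshCell hs ▸ hint)

theorem ofReal_mul_exactWeight_le (hγ₀ : ∀ z ≤ 0, 0 ≤ γ z)
    (hint : IntegrableOn γ (Iic 0)) (hs : 0 < s) (k : ℕ) :
    ENNReal.ofReal (k * exactWeight γ s k) ≤
      ENNReal.ofReal (1 / s) * ∫⁻ z in meshCell s k, ENNReal.ofReal (|z| * γ z) := by
  have hk : (0 : ℝ) ≤ k * s := by positivity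
  have hcell := meshCell_subset_Iic hs k
  have hmoment := ofReal_neg_mul_setIntegral_Ioc_le (a := -((k : ℝ) + 1) * s)
    (by linarith : -(k : ℝ) * s ≤ 0) (hint.mono_set hcell) fun z hz => hγ₀ z (hcell hz)
  rw [← meshCell, ← exactWeight, neg_mul (k : ℝ) s, neg_neg] at hmoment
  calc ENNReal.ofReal (k * exactWeight γ s k)
      = ENNReal.ofReal (1 / s) * ENNReal.ofReal (k * s * exactWeight γ s k) := by
        rw [← ENNReal.ofReal_mul (by positivity)]; congr 1; field_simp
    _ ≤ _ := by gcongr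

theorem tsum_ofReal_mul_exactWeight_le (hγ₀ : ∀ z ≤ 0, 0 ≤ γ z)
    (hint : IntegrableOn γ (Iic 0)) (hs : 0 < s) :
    ∑' k : ℕ, ENNReal.ofReal (k * exactWeight γ s k) ≤
      ENNReal.ofReal (1 / s) * ∫⁻ z in Iic 0, ENNReal.ofReal (|z| * γ z) :=
  calc ∑' k : ℕ, ENNReal.ofReal (k * exactWeight γ s k)
      ≤ ∑' k : ℕ,
          ENNReal.ofReal (1 / s) * ∫⁻ z in meshCell s k, ENNReal.ofReal (|z| * γ z) :=
        ENNReal.tsum_le_tsum (ofReal_mul_exactWeight_le hγ₀ hint hs)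
    _ = _ := by
      rw [ENNReal.tsum_mul_left, ← lintegral_iUnion measurableSet_meshCell
        (pairwise_disjoint_meshCell hs.le), iUnion_meshCell hs]

end MeshCells

theorem exact_quadrature_weights_properties_general
    (γ : ℝ → ℝ) (hInt : Integrable γ) (hnn : ∀ z, 0 ≤ γ z)
    (hmono : MonotoneOn γ (Set.Iic (0:ℝ)))
    (hconv : ConvexOn ℝ (Set.Iic (0:ℝ)) γ)
    (hint1 : ∫ z in Set.Iic (0:ℝ), γ z = 1)
    (s : ℝ) (hs : 0 < s)
    (γk : ℕ → ℝ)
    (hγk : ∀ k : ℕ, γk k = ∫ z in Set.Icc (-((k:ℝ)+1)*s) (-(k:ℝ)*s), γ z) :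
    (∀ k : ℕ, 0 ≤ γk (k+1) ∧ γk (k+1) ≤ γk k) ∧
    HasSum γk 1 ∧
    (∀ k : ℕ, 2 * γk (k+1) ≤ γk k + γk (k+2)) ∧
    ∑' k : ℕ, ENNReal.ofReal ((k:ℝ) * γk k) ≤
      ENNReal.ofReal (1/s) * ∫⁻ z in Set.Iic (0:ℝ), ENNReal.ofReal (|z| * γ z) := by
  obtain rfl : γk = exactWeight γ s :=
    funext fun k => by rw [hγk, integral_Icc_eq_integral_Ioc, exactWeight, meshCell]
  have hγ₀ : ∀ z ≤ 0, 0 ≤ γ z := fun z _ => hnn z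
  exact ⟨fun k => ⟨exactWeight_nonneg hγ₀ hs _, exactWeight_succ_le hmono hs.le k⟩,
    hint1 ▸ hasSum_exactWeight hInt.integrableOn hs,
    two_mul_exactWeight_succ_le hconv hInt.integrableOn hs.le,
    tsum_ofReal_mul_exactWeight_le hγ₀ hInt.integrableOn hs⟩

/-- Exact quadrature weights of a nonnegative, nondecreasing, convex kernel
supported in `(−∞,0]` with unit integral satisfy: nonnegativity and
monotonicity, normalization, convexity, and the first-moment bound. -/
theorem exact_quadrature_weights_properties
    (γ : ℝ → ℝ) (hInt : Integrable γ) (hnn : ∀ z, 0 ≤ γ z)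
    (hsupp : ∀ z : ℝ, 0 < z → γ z = 0)
    (hmono : MonotoneOn γ (Set.Iic (0:ℝ)))
    (hconv : ConvexOn ℝ (Set.Iic (0:ℝ)) γ)
    (hint1 : ∫ z in Set.Iic (0:ℝ), γ z = 1)
    (s : ℝ) (hs : 0 < s)
    (γk : ℕ → ℝ)
    (hγk : ∀ k : ℕ, γk k = ∫ z in Set.Icc (-((k:ℝ)+1)*s) (-(k:ℝ)*s), γ z) :
    (∀ k : ℕ, 0 ≤ γk (k+1) ∧ γk (k+1) ≤ γk k) ∧
    HasSum γk 1 ∧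
    (∀ k : ℕ, 2 * γk (k+1) ≤ γk k + γk (k+2)) ∧
    ∑' k : ℕ, ENNReal.ofReal ((k:ℝ) * γk k) ≤
      ENNReal.ofReal (1/s) * ∫⁻ z in Set.Iic (0:ℝ), ENNReal.ofReal (|z| * γ z) :=
  exact_quadrature_weights_properties_general γ hInt hnn hmono hconv hint1 s hs γk hγk
end

section
/- Conservative update for the discrete nonlocal impact with geometric weights: assume the weights are geometric, γ_k = γ₀ (1−γ₀)^k with γ₀ ∈ (0,1), and assume the CFL condition λ(M + L) ≤ 1. Then for every n ∈ ℕ and j ∈ ℤ the series below converges absolutely and W^{n+1}_j = Wⁿ_j + λ (Wⁿ_{j−1} − Wⁿ_j) V(Wⁿ_j) − λ ∑_{k=0}^∞ γ_k Wⁿ_{j+k} (V(Wⁿ_{j+k+1}) − V(Wⁿ_{j+k})). -/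
lemma godunov_aux_summable (γ : ℕ → ℝ) (hγ : Summable γ) (hγnn : ∀ k, 0 ≤ γ k)
    (g : ℕ → ℝ) (C : ℝ) (hg : ∀ k, |g k| ≤ C) : Summable fun k => γ k * g k := by
  apply Summable.of_abs
  apply Summable.of_nonneg_of_le (fun k => abs_nonneg _) (fun k => ?_) (hγ.mul_right C)
  rw [abs_mul, abs_of_nonneg (hγnn k)]
  exact mul_le_mul_of_nonneg_left (hg k) (hγnn k)

lemma godunov_aux_shift (γ0 : ℝ) (γ : ℕ → ℝ) (hgeom : ∀ k, γ k = γ0 * (1-γ0)^k)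
    (g : ℕ → ℝ) (h : Summable fun k => γ k * g k) :
    ∑' k, γ k * g k = γ0 * g 0 + (1-γ0) * ∑' k, γ k * g (k+1) := by
  rw [Summable.tsum_eq_zero_add h, ← tsum_mul_left]
  congr 1
  · rw [hgeom 0]; ring
  · exact tsum_congr fun k => by rw [hgeom (k+1), hgeom k]; ring

/-- Conservative update for the discrete nonlocal impact with geometric
weights `γ_k = γ₀ (1−γ₀)^k`: under the CFL condition `λ (M + L) ≤ 1`, the
series converges absolutely and
`W^{n+1}_j = Wⁿ_j + λ (Wⁿ_{j−1} − Wⁿ_j) V(Wⁿ_j) − λ ∑ₖ γ_k Wⁿ_{j+k} (V(Wⁿ_{j+k+1}) − V(Wⁿ_{j+k}))`. -/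
theorem godunov_W_update_geometric
    (lam M L : ℝ) (hlam : 0 < lam) (hM : 0 ≤ M) (hL : 0 ≤ L)
    (V : ℝ → ℝ)
    (hVlip : ∀ x y : ℝ, |V x - V y| ≤ L * |x - y|)
    (hVmono : ∀ x ∈ Set.Icc (0:ℝ) 1, ∀ y ∈ Set.Icc (0:ℝ) 1, x ≤ y → V y ≤ V x)
    (hVbd : ∀ ξ ∈ Set.Icc (0:ℝ) 1, V ξ ∈ Set.Icc (0:ℝ) M)
    (γ : ℕ → ℝ)
    (hγnn : ∀ k, 0 ≤ γ k) (hγmono : ∀ k, γ (k+1) ≤ γ k)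
    (hγsum : HasSum γ 1)
    (ρ0 : ℤ → ℝ) (hρ0 : ∀ j, ρ0 j ∈ Set.Icc (0:ℝ) 1)
    (ρ W : ℕ → ℤ → ℝ)
    (hinit : ∀ j : ℤ, ρ 0 j = ρ0 j)
    (hW : ∀ (n : ℕ) (j : ℤ), W n j = ∑' k : ℕ, γ k * ρ n (j + (k:ℤ)))
    (hupd : ∀ (n : ℕ) (j : ℤ),
      ρ (n+1) j = ρ n j + lam * (ρ n (j-1) * V (W n j) - ρ n j * V (W n (j+1))))
    (hCFL : lam * (M + L) ≤ 1)
    (γ0 : ℝ) (hγ0 : γ0 ∈ Set.Ioo (0:ℝ) 1)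
    (hgeom : ∀ k : ℕ, γ k = γ0 * (1 - γ0)^k) :
    ∀ (n : ℕ) (j : ℤ),
      (Summable fun k : ℕ =>
        |γ k * (W n (j + (k:ℤ)) * (V (W n (j + (k:ℤ) + 1)) - V (W n (j + (k:ℤ)))))|) ∧
      W (n+1) j = W n j + lam * (W n (j-1) - W n j) * V (W n j) -
        lam * ∑' k : ℕ,
          γ k * (W n (j + (k:ℤ)) * (V (W n (j + (k:ℤ) + 1)) - V (W n (j + (k:ℤ))))) := by
  obtain ⟨hγ0pos, hγ0lt⟩ := hγ0
  have hγS : Summable γ := hγsum.summable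
  have hbd : ∀ (g : ℤ → ℝ) (C : ℝ), (∀ i, |g i| ≤ C) → ∀ j' : ℤ,
      Summable fun k : ℕ => γ k * g (j' + (k:ℤ)) :=
    fun g C hg j' => godunov_aux_summable γ hγS hγnn (fun k => g (j' + (k:ℤ))) C (fun k => hg _)
  -- boundedness of W given boundedness of ρ at level n
  have hWmem : ∀ n, (∀ i, ρ n i ∈ Set.Icc (0:ℝ) 1) → ∀ j, W n j ∈ Set.Icc (0:ℝ) 1 := by
    intro n ih j
    have hρabs : ∀ i : ℤ, |ρ n i| ≤ 1 := fun i => abs_le.2 ⟨by linarith [(ih i).1], (ih i).2⟩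
    have hsum : Summable fun k : ℕ => γ k * ρ n (j + (k:ℤ)) := hbd _ 1 hρabs j
    rw [hW n j]
    constructor
    · exact tsum_nonneg fun k => mul_nonneg (hγnn k) (ih _).1
    · calc ∑' k : ℕ, γ k * ρ n (j + (k:ℤ)) ≤ ∑' k : ℕ, γ k :=
          Summable.tsum_le_tsum (fun k => mul_le_of_le_one_right (hγnn k) (ih _).2) hsum hγS
        _ = 1 := hγsum.tsum_eq
  -- the geometric recursion for W
  have hWrec : ∀ n, (∀ i, ρ n i ∈ Set.Icc (0:ℝ) 1) → ∀ j : ℤ,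
      W n j = γ0 * ρ n j + (1-γ0) * W n (j+1) := by
    intro n ih j
    have hρabs : ∀ i : ℤ, |ρ n i| ≤ 1 := fun i => abs_le.2 ⟨by linarith [(ih i).1], (ih i).2⟩
    have hsum : Summable fun k : ℕ => γ k * ρ n (j + (k:ℤ)) := hbd _ 1 hρabs j
    have h := godunov_aux_shift γ0 γ hgeom (fun k : ℕ => ρ n (j + (k:ℤ))) hsum
    rw [hW n j, h, hW n (j+1)]
    congr 1
    · norm_num
    · congr 1
      refine tsum_congr fun k => ?_
      congr 2
      push_cast
      ring
  -- invariance of [0,1]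
  have hρm : ∀ n i, ρ n i ∈ Set.Icc (0:ℝ) 1 := by
    intro n
    induction n with
    | zero => intro i; rw [hinit]; exact hρ0 i
    | succ n ih =>
      intro j
      have hWm := hWmem n ih
      have hr := ih j
      have hrm := ih (j-1)
      have hVj := hVbd _ (hWm j)
      have hVj1 := hVbd _ (hWm (j+1))
      have hlip : V (W n j) - V (W n (j+1)) ≤ L * (1 - ρ n j) := by
        rcases le_or_gt (W n j) (W n (j+1)) with hc | hc
        · have h2 := hVlip (W n j) (W n (j+1))
          have h5 : |W n j - W n (j+1)| = W n (j+1) - W n j := by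
            rw [abs_sub_comm]; exact abs_of_nonneg (by linarith)
          rw [h5] at h2
          have hrec := hWrec n ih j
          have h4 : W n (j+1) - W n j ≤ 1 - ρ n j := by
            nlinarith [mul_nonneg (by linarith : (0:ℝ) ≤ 1-γ0) (by linarith [hr.2] : (0:ℝ) ≤ 1 - ρ n j),
              mul_nonneg hγ0pos.le (by linarith [(hWm (j+1)).2] : (0:ℝ) ≤ 1 - W n (j+1))]
          linarith [le_abs_self (V (W n j) - V (W n (j+1))),
            mul_le_mul_of_nonneg_left h4 hL]
        · have := hVmono (W n (j+1)) (hWm (j+1)) (W n j) (hWm j) hc.le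
          linarith [mul_nonneg hL (by linarith [hr.2] : (0:ℝ) ≤ 1 - ρ n j)]
      rw [hupd n j]
      constructor
      · have t1 : lam * V (W n (j+1)) ≤ lam * M := mul_le_mul_of_nonneg_left hVj1.2 hlam.le
        have t2 : lam * M ≤ lam * (M+L) := mul_le_mul_of_nonneg_left (by linarith) hlam.le
        nlinarith [mul_nonneg (mul_nonneg hlam.le hrm.1) hVj.1,
          mul_nonneg hr.1 (by linarith : (0:ℝ) ≤ 1 - lam * V (W n (j+1)))]
      · have h_a := mul_le_mul_of_nonneg_left hlip hlam.le
        have h_b := mul_nonneg (mul_nonneg hlam.le (sub_nonneg.2 hr.2)) (sub_nonneg.2 hVj1.2)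
        have h_c := mul_nonneg (sub_nonneg.2 hr.2) (sub_nonneg.2 hCFL)
        have h_d := mul_nonneg (mul_nonneg hlam.le hVj.1) (sub_nonneg.2 hrm.2)
        nlinarith [h_a, h_b, h_c, h_d]
  -- main computation
  intro n j
  have hw : ∀ i, W n i ∈ Set.Icc (0:ℝ) 1 := hWmem n (hρm n)
  have hVw : ∀ i, V (W n i) ∈ Set.Icc (0:ℝ) M := fun i => hVbd _ (hw i)
  have hmulbd : ∀ a b : ℝ, |a| ≤ 1 → |b| ≤ M → |a*b| ≤ M := by
    intro a b ha hb
    rw [abs_mul]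
    nlinarith [abs_nonneg a, abs_nonneg b]
  have habs01 : ∀ x : ℝ, x ∈ Set.Icc (0:ℝ) 1 → |x| ≤ 1 :=
    fun x hx => abs_le.2 ⟨by linarith [hx.1], hx.2⟩
  have habsM : ∀ x : ℝ, x ∈ Set.Icc (0:ℝ) M → |x| ≤ M :=
    fun x hx => abs_le.2 ⟨by linarith [hx.1], hx.2⟩
  have hsumρ : Summable fun k : ℕ => γ k * ρ n (j + (k:ℤ)) :=
    hbd _ 1 (fun i => habs01 _ (hρm n i)) j
  have hsf : ∀ j' : ℤ, Summable fun k : ℕ =>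
      γ k * (ρ n (j' + (k:ℤ)) * V (W n (j' + (k:ℤ) + 1))) := by
    intro j'
    exact hbd (fun i => ρ n i * V (W n (i+1))) M
      (fun i => hmulbd _ _ (habs01 _ (hρm n i)) (habsM _ (hVw (i+1)))) j'
  have hP : Summable fun k : ℕ => γ k * (W n (j + (k:ℤ)) * V (W n (j + (k:ℤ) + 1))) :=
    hbd (fun i => W n i * V (W n (i+1))) M
      (fun i => hmulbd _ _ (habs01 _ (hw i)) (habsM _ (hVw (i+1)))) j
  have hQ : Summable fun k : ℕ => γ k * (W n (j + (k:ℤ)) * V (W n (j + (k:ℤ)))) :=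
    hbd (fun i => W n i * V (W n i)) M
      (fun i => hmulbd _ _ (habs01 _ (hw i)) (habsM _ (hVw i))) j
  have hQ1 : Summable fun k : ℕ => γ k * (W n (j + (k:ℤ) + 1) * V (W n (j + (k:ℤ) + 1))) :=
    hbd (fun i => W n (i+1) * V (W n (i+1))) M
      (fun i => hmulbd _ _ (habs01 _ (hw (i+1))) (habsM _ (hVw (i+1)))) j
  have hT : Summable fun k : ℕ =>
      γ k * (W n (j + (k:ℤ)) * (V (W n (j + (k:ℤ) + 1)) - V (W n (j + (k:ℤ))))) := by
    refine hbd (fun i => W n i * (V (W n (i+1)) - V (W n i))) M (fun i => ?_) j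
    refine hmulbd _ _ (habs01 _ (hw i)) ?_
    have h1 := hVw (i+1); have h2 := hVw i
    exact abs_le.2 ⟨by linarith [h1.1, h2.2], by linarith [h1.2, h2.1]⟩
  refine ⟨hT.abs, ?_⟩
  -- pointwise expansion of the update
  have e : ∀ k : ℕ, γ k * ρ (n+1) (j + (k:ℤ)) =
      γ k * ρ n (j + (k:ℤ)) +
      (lam * (γ k * (ρ n ((j-1) + (k:ℤ)) * V (W n ((j-1) + (k:ℤ) + 1)))) -
       lam * (γ k * (ρ n (j + (k:ℤ)) * V (W n (j + (k:ℤ) + 1))))) := by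
    intro k
    rw [show (j-1) + (k:ℤ) + 1 = j + (k:ℤ) from by ring,
      show (j-1) + (k:ℤ) = j + (k:ℤ) - 1 from by ring, hupd n (j + (k:ℤ))]
    ring
  have H1 : W (n+1) j = W n j +
      lam * (∑' k : ℕ, γ k * (ρ n ((j-1) + (k:ℤ)) * V (W n ((j-1) + (k:ℤ) + 1)))) -
      lam * (∑' k : ℕ, γ k * (ρ n (j + (k:ℤ)) * V (W n (j + (k:ℤ) + 1)))) := by
    rw [hW (n+1) j, tsum_congr e,
      Summable.tsum_add hsumρ (((hsf (j-1)).mul_left lam).sub ((hsf j).mul_left lam)),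
      Summable.tsum_sub ((hsf (j-1)).mul_left lam) ((hsf j).mul_left lam),
      tsum_mul_left, tsum_mul_left, ← hW n j]
    ring
  have hγρ : ∀ i : ℤ, γ0 * ρ n i = W n i - (1-γ0) * W n (i+1) := by
    intro i
    have := hWrec n (hρm n) i
    linarith
  have hγρ' : γ0 * ρ n (j-1) = W n (j-1) - (1-γ0) * W n j := by
    have := hγρ (j-1)
    rwa [show j - 1 + 1 = j from by ring] at this
  have hS1 : (∑' k : ℕ, γ k * (ρ n ((j-1) + (k:ℤ)) * V (W n ((j-1) + (k:ℤ) + 1)))) =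
      γ0 * (ρ n (j-1) * V (W n j)) +
      (1-γ0) * ∑' k : ℕ, γ k * (ρ n (j + (k:ℤ)) * V (W n (j + (k:ℤ) + 1))) := by
    have h := godunov_aux_shift γ0 γ hgeom
      (fun k : ℕ => ρ n ((j-1) + (k:ℤ)) * V (W n ((j-1) + (k:ℤ) + 1))) (hsf (j-1))
    rw [h]
    congr 1
    · norm_num
    · congr 1
      refine tsum_congr fun k => ?_
      congr 2 <;> push_cast <;> ring
  have hQeq : (∑' k : ℕ, γ k * (W n (j + (k:ℤ)) * V (W n (j + (k:ℤ))))) =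
      γ0 * (W n j * V (W n j)) +
      (1-γ0) * ∑' k : ℕ, γ k * (W n (j + (k:ℤ) + 1) * V (W n (j + (k:ℤ) + 1))) := by
    have h := godunov_aux_shift γ0 γ hgeom
      (fun k : ℕ => W n (j + (k:ℤ)) * V (W n (j + (k:ℤ)))) hQ
    rw [h]
    congr 1
    · norm_num
    · congr 1
      refine tsum_congr fun k => ?_
      congr 2 <;> push_cast <;> ring
  have hS2eq : γ0 * (∑' k : ℕ, γ k * (ρ n (j + (k:ℤ)) * V (W n (j + (k:ℤ) + 1)))) =
      (∑' k : ℕ, γ k * (W n (j + (k:ℤ)) * V (W n (j + (k:ℤ) + 1)))) -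
      (1-γ0) * ∑' k : ℕ, γ k * (W n (j + (k:ℤ) + 1) * V (W n (j + (k:ℤ) + 1))) := by
    rw [← tsum_mul_left, ← tsum_mul_left, ← Summable.tsum_sub hP (hQ1.mul_left (1-γ0))]
    refine tsum_congr fun k => ?_
    linear_combination (γ k * V (W n (j + (k:ℤ) + 1))) * hγρ (j + (k:ℤ))
  have hTeq : (∑' k : ℕ,
        γ k * (W n (j + (k:ℤ)) * (V (W n (j + (k:ℤ) + 1)) - V (W n (j + (k:ℤ)))))) =
      (∑' k : ℕ, γ k * (W n (j + (k:ℤ)) * V (W n (j + (k:ℤ) + 1)))) -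
      (∑' k : ℕ, γ k * (W n (j + (k:ℤ)) * V (W n (j + (k:ℤ))))) := by
    rw [← Summable.tsum_sub hP hQ]
    exact tsum_congr fun k => by ring
  linear_combination H1 + lam * hS1 + lam * V (W n j) * hγρ' - lam * hS2eq - lam * hQeq +
    lam * hTeq
end

section
/- ℓ¹-deviation estimate between ρⁿ and Wⁿ for geometric weights: assume the weights are geometric, γ_k = γ₀ (1−γ₀)^k with γ₀ ∈ (0,1), assume the CFL condition λ(M + L) ≤ 1, and let ε, h, c > 0 satisfy (1−γ₀)/γ₀ ≤ c ε / h. Then for every n ∈ ℕ: h ∑_{j∈ℤ} |Wⁿ_j − ρⁿ_j| ≤ c ε ∑_{j∈ℤ} |Wⁿ_{j+1} − Wⁿ_j|, where the sums of nonnegative terms are valued in [0,∞]. -/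
open scoped ENNReal

/-!
For geometric weights the averaged density satisfies the one-sided recursion
`Wⁿ_j = γ₀ ρⁿ_j + (1 - γ₀) Wⁿ_{j+1}`, i.e. `Wⁿ_j - ρⁿ_j = (1 - γ₀)/γ₀ · (Wⁿ_{j+1} - Wⁿ_j)`,
so the estimate holds term by term. That identity needs the series defining `Wⁿ_j` to converge,
i.e. each `ρⁿ` to be bounded; this follows by induction on `n` from the update rule, since the
Lipschitz `V` is bounded on bounded sets.
-/

theorem abs_apply_le_of_abs_sub_le {V : ℝ → ℝ} {L R x : ℝ}
    (hV : ∀ x y, |V x - V y| ≤ L * |x - y|) (hx : |x| ≤ R) : |V x| ≤ |V 0| + L * R := by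
  have hL : 0 ≤ L := by simpa using (abs_nonneg _).trans (hV 1 0)
  calc |V x| ≤ |V 0| + |V x - V 0| := by linarith [abs_sub_abs_le_abs_sub (V x) (V 0)]
    _ ≤ |V 0| + L * |x| := by simpa using hV x 0
    _ ≤ |V 0| + L * R := by gcongr

section ShiftedSeries

variable {γ : ℕ → ℝ} {u : ℤ → ℝ} {B : ℝ}

theorem summable_mul_shift (hγ : Summable γ) (hu : ∀ j, |u j| ≤ B) (j : ℤ) :
    Summable fun k : ℕ => γ k * u (j + k) :=
  Summable.of_norm_bounded (hγ.abs.mul_right B) fun k => by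
    rw [Real.norm_eq_abs, abs_mul]
    exact mul_le_mul_of_nonneg_left (hu _) (abs_nonneg _)

theorem abs_tsum_mul_shift_le (hγ : Summable γ) (hu : ∀ j, |u j| ≤ B) (j : ℤ) :
    |∑' k : ℕ, γ k * u (j + k)| ≤ (∑' k, |γ k|) * B := by
  have hnorm : Summable fun k : ℕ => ‖γ k * u (j + k)‖ := (summable_mul_shift hγ hu j).norm
  calc |∑' k : ℕ, γ k * u (j + k)| ≤ ∑' k : ℕ, ‖γ k * u (j + k)‖ := norm_tsum_le_tsum_norm hnorm
    _ ≤ ∑' k, |γ k| * B := by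
        refine hnorm.tsum_le_tsum (fun k => ?_) (hγ.abs.mul_right B)
        rw [Real.norm_eq_abs, abs_mul]
        exact mul_le_mul_of_nonneg_left (hu _) (abs_nonneg _)
    _ = (∑' k, |γ k|) * B := tsum_mul_right

end ShiftedSeries

section GeometricAverage

variable {γ : ℕ → ℝ} {γ₀ : ℝ} {u W : ℤ → ℝ} {j : ℤ}

theorem geometric_average_eq (hgeom : ∀ k, γ k = γ₀ * (1 - γ₀) ^ k)
    (hW : ∀ j, W j = ∑' k : ℕ, γ k * u (j + k)) (hs : Summable fun k : ℕ => γ k * u (j + k)) :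
    W j = γ₀ * u j + (1 - γ₀) * W (j + 1) := by
  have htail : ∀ k : ℕ, γ (k + 1) * u (j + (k + 1 : ℕ)) = (1 - γ₀) * (γ k * u (j + 1 + k)) := by
    intro k
    rw [hgeom, hgeom, Nat.cast_succ, ← add_assoc, add_right_comm j]
    ring
  rw [hW, hs.tsum_eq_zero_add, tsum_congr htail, tsum_mul_left, ← hW, hgeom]
  simp

theorem geometric_average_sub_eq (hγ₀ : γ₀ ≠ 0) (hgeom : ∀ k, γ k = γ₀ * (1 - γ₀) ^ k)
    (hW : ∀ j, W j = ∑' k : ℕ, γ k * u (j + k)) (hs : Summable fun k : ℕ => γ k * u (j + k)) :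
    W j - u j = (1 - γ₀) / γ₀ * (W (j + 1) - W j) := by
  rw [div_mul_eq_mul_div, eq_div_iff hγ₀]
  linear_combination geometric_average_eq hgeom hW hs

end GeometricAverage

theorem abs_godunov_step_le {lam B K : ℝ} {u v : ℤ → ℝ} (hu : ∀ j, |u j| ≤ B)
    (hv : ∀ j, |v j| ≤ K) (j : ℤ) :
    |u j + lam * (u (j - 1) * v j - u j * v (j + 1))| ≤ B + |lam| * (B * K + B * K) := by
  have hprod : ∀ i i', |u i * v i'| ≤ B * K := fun i i' => by
    rw [abs_mul]
    exact mul_le_mul (hu i) (hv i') (abs_nonneg _) ((abs_nonneg _).trans (hu i))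
  calc |u j + lam * (u (j - 1) * v j - u j * v (j + 1))|
      ≤ |u j| + |lam| * (|u (j - 1) * v j| + |u j * v (j + 1)|) := by
        grw [abs_add_le, abs_mul, abs_sub _ _]
    _ ≤ B + |lam| * (B * K + B * K) := by grw [hu j, hprod, hprod]

theorem exists_abs_le_godunov {lam L B₀ : ℝ} {V : ℝ → ℝ}
    (hVlip : ∀ x y, |V x - V y| ≤ L * |x - y|) {γ : ℕ → ℝ} (hγ : Summable γ)
    {ρ W : ℕ → ℤ → ℝ} (hW : ∀ n j, W n j = ∑' k : ℕ, γ k * ρ n (j + k))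
    (hupd : ∀ n j,
      ρ (n + 1) j = ρ n j + lam * (ρ n (j - 1) * V (W n j) - ρ n j * V (W n (j + 1))))
    (h0 : ∀ j, |ρ 0 j| ≤ B₀) (n : ℕ) : ∃ B, ∀ j, |ρ n j| ≤ B := by
  induction n with
  | zero => exact ⟨B₀, h0⟩
  | succ n ih =>
    obtain ⟨B, hB⟩ := ih
    have hVW : ∀ j, |V (W n j)| ≤ |V 0| + L * ((∑' k, |γ k|) * B) := fun j =>
      abs_apply_le_of_abs_sub_le hVlip (hW n j ▸ abs_tsum_mul_shift_le hγ hB j)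
    exact ⟨_, fun j => hupd n j ▸ abs_godunov_step_le hB hVW j⟩

theorem ofReal_mul_abs_le_of_eq_mul {a b r h C : ℝ} (hab : a = r * b) (hr : 0 ≤ r)
    (hh : 0 < h) (hrC : r ≤ C / h) :
    ENNReal.ofReal h * ENNReal.ofReal |a| ≤ ENNReal.ofReal C * ENNReal.ofReal |b| := by
  rw [← ENNReal.ofReal_mul hh.le, ← ENNReal.ofReal_mul' (abs_nonneg b)]
  refine ENNReal.ofReal_le_ofReal ?_
  rw [hab, abs_mul, abs_of_nonneg hr, ← mul_assoc]
  exact mul_le_mul_of_nonneg_right ((le_div_iff₀' hh).mp hrC) (abs_nonneg b)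

theorem godunov_l1_deviation_geometric_general
    (lam L : ℝ)
    (V : ℝ → ℝ)
    (hVlip : ∀ x y : ℝ, |V x - V y| ≤ L * |x - y|)
    (γ : ℕ → ℝ)
    (hγsum : HasSum γ 1)
    (ρ0 : ℤ → ℝ) (hρ0 : ∀ j, ρ0 j ∈ Set.Icc (0:ℝ) 1)
    (ρ W : ℕ → ℤ → ℝ)
    (hinit : ∀ j : ℤ, ρ 0 j = ρ0 j)
    (hW : ∀ (n : ℕ) (j : ℤ), W n j = ∑' k : ℕ, γ k * ρ n (j + (k:ℤ)))
    (hupd : ∀ (n : ℕ) (j : ℤ),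
      ρ (n+1) j = ρ n j + lam * (ρ n (j-1) * V (W n j) - ρ n j * V (W n (j+1))))
    (γ0 : ℝ) (hγ0 : γ0 ∈ Set.Ioo (0:ℝ) 1)
    (hgeom : ∀ k : ℕ, γ k = γ0 * (1 - γ0)^k)
    (ε h c : ℝ) (hh : 0 < h)
    (hratio : (1 - γ0) / γ0 ≤ c * ε / h) :
    ∀ n : ℕ,
      ENNReal.ofReal h * ∑' j : ℤ, ENNReal.ofReal |W n j - ρ n j| ≤
      ENNReal.ofReal (c * ε) * ∑' j : ℤ, ENNReal.ofReal |W n (j+1) - W n j| := by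
  intro n
  have h0 : ∀ j, |ρ 0 j| ≤ 1 := fun j => by
    rw [hinit, abs_le]
    exact ⟨by linarith [(hρ0 j).1], (hρ0 j).2⟩
  obtain ⟨B, hB⟩ := exists_abs_le_godunov hVlip hγsum.summable hW hupd h0 n
  have hr : 0 ≤ (1 - γ0) / γ0 := div_nonneg (sub_nonneg.mpr hγ0.2.le) hγ0.1.le
  have hpt : ∀ j : ℤ, ENNReal.ofReal h * ENNReal.ofReal |W n j - ρ n j| ≤
      ENNReal.ofReal (c * ε) * ENNReal.ofReal |W n (j + 1) - W n j| := fun j =>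
    ofReal_mul_abs_le_of_eq_mul (geometric_average_sub_eq hγ0.1.ne' hgeom (hW n)
      (summable_mul_shift hγsum.summable hB j)) hr hh hratio
  simpa only [ENNReal.tsum_mul_left] using ENNReal.tsum_le_tsum hpt

/-- ℓ¹-deviation estimate between `ρⁿ` and `Wⁿ` for geometric weights:
if `(1−γ₀)/γ₀ ≤ c ε / h`, then
`h ∑_j |Wⁿ_j − ρⁿ_j| ≤ c ε ∑_j |Wⁿ_{j+1} − Wⁿ_j|` (sums in `[0,∞]`). -/
theorem godunov_l1_deviation_geometric
    (lam M L : ℝ) (hlam : 0 < lam) (hM : 0 ≤ M) (hL : 0 ≤ L)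
    (V : ℝ → ℝ)
    (hVlip : ∀ x y : ℝ, |V x - V y| ≤ L * |x - y|)
    (hVmono : ∀ x ∈ Set.Icc (0:ℝ) 1, ∀ y ∈ Set.Icc (0:ℝ) 1, x ≤ y → V y ≤ V x)
    (hVbd : ∀ ξ ∈ Set.Icc (0:ℝ) 1, V ξ ∈ Set.Icc (0:ℝ) M)
    (γ : ℕ → ℝ)
    (hγnn : ∀ k, 0 ≤ γ k) (hγmono : ∀ k, γ (k+1) ≤ γ k)
    (hγsum : HasSum γ 1)
    (ρ0 : ℤ → ℝ) (hρ0 : ∀ j, ρ0 j ∈ Set.Icc (0:ℝ) 1)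
    (ρ W : ℕ → ℤ → ℝ)
    (hinit : ∀ j : ℤ, ρ 0 j = ρ0 j)
    (hW : ∀ (n : ℕ) (j : ℤ), W n j = ∑' k : ℕ, γ k * ρ n (j + (k:ℤ)))
    (hupd : ∀ (n : ℕ) (j : ℤ),
      ρ (n+1) j = ρ n j + lam * (ρ n (j-1) * V (W n j) - ρ n j * V (W n (j+1))))
    (hCFL : lam * (M + L) ≤ 1)
    (γ0 : ℝ) (hγ0 : γ0 ∈ Set.Ioo (0:ℝ) 1)
    (hgeom : ∀ k : ℕ, γ k = γ0 * (1 - γ0)^k)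
    (ε h c : ℝ) (hε : 0 < ε) (hh : 0 < h) (hc : 0 < c)
    (hratio : (1 - γ0) / γ0 ≤ c * ε / h) :
    ∀ n : ℕ,
      ENNReal.ofReal h * ∑' j : ℤ, ENNReal.ofReal |W n j - ρ n j| ≤
      ENNReal.ofReal (c * ε) * ∑' j : ℤ, ENNReal.ofReal |W n (j+1) - W n j| :=
  godunov_l1_deviation_geometric_general lam L V hVlip γ hγsum ρ0 hρ0 ρ W hinit hW hupd γ0 hγ0 hgeom
    ε h c hh hratio
end
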